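/- arXiv:2410.16661 — 4 statements merged into one kernel-verified Lean document; each statement's English description precedes it below -/
import Mathlib

section
/- Let n ≥ 1 and s ∈ (0,1). There exists a constant C = C(n,s) such that for every bounded Lipschitz function u : ℝⁿ → ℝ, the function 𝔤(x) = c_{n,s/2} ∫_{ℝⁿ} (u(x) − u(x+z))/|z|^{n+s} dz satisfies |𝔤(x) − 𝔤(y)| ≤ C‖u‖_{C^{0,1}(ℝⁿ)} |x−y|^{1−s} for all x, y ∈ ℝⁿ; that is, 𝔤 = (−Δ)^{s/2}u belongs to C^{1−s}(ℝⁿ) with ‖𝔤‖_{C^{1−s}(ℝⁿ)} ≤ C‖u‖_{C^{0,1}(ℝⁿ)}. -/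
open MeasureTheory Real Set Metric Bornology Filter
open scoped RealInnerProductSpace ENNReal NNReal Pointwise

noncomputable section

abbrev En (n : ℕ) : Type := EuclideanSpace ℝ (Fin n)

/-- The normalizing constant `c_{n,s}`. -/
def cK (n : ℕ) (s : ℝ) : ℝ :=
  s * (2 : ℝ) ^ (2 * s) * Real.Gamma (((n : ℝ) + 2 * s) / 2) /
    (Real.pi ^ ((n : ℝ) / 2) * Real.Gamma (1 - s))

/-- The fractional Laplacian `(-Δ)ˢ u (x)`. -/
def fracLap (n : ℕ) (s : ℝ) (u : En n → ℝ) (x : En n) : ℝ :=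
  (cK n s / 2) * ∫ y : En n, (2 * u x - u (x + y) - u (x - y)) / ‖y‖ ^ ((n : ℝ) + 2 * s)

/-- `(-Δ)^{s/2} u (x)`, defined via the non-symmetrized integral. -/
def fracHalf (n : ℕ) (s : ℝ) (u : En n → ℝ) (x : En n) : ℝ :=
  cK n (s / 2) * ∫ z : En n, (u x - u (x + z)) / ‖z‖ ^ ((n : ℝ) + s)

/-- The squared Gagliardo-type seminorm `[u]_s²`. -/
def seminormSsq (n : ℕ) (s : ℝ) (u : En n → ℝ) : ℝ :=
  (cK n s / 2) * ∫ p : En n × En n, (u p.1 - u p.2) ^ 2 / ‖p.1 - p.2‖ ^ ((n : ℝ) + 2 * s)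

/-- The squared seminorm `[u]₁² = ∫_Ω |∇u|²`. -/
def seminorm1sq (n : ℕ) (Ω : Set (En n)) (u : En n → ℝ) : ℝ :=
  ∫ x in Ω, ‖gradient u x‖ ^ 2

/-- The Laplacian as the trace of the Hessian. -/
def lap (n : ℕ) (u : En n → ℝ) (x : En n) : ℝ :=
  ∑ i : Fin n, fderiv ℝ (fun y => fderiv ℝ u y (EuclideanSpace.single i 1)) x
    (EuclideanSpace.single i 1)

/-- The Hessian `D²u(x)` as a continuous bilinear-type map; `‖hess n u x‖` is its operator
norm. -/
def hess (n : ℕ) (u : En n → ℝ) (x : En n) : En n →L[ℝ] En n →L[ℝ] ℝ :=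
  fderiv ℝ (fderiv ℝ u) x

/-- A bounded C² domain `Ω ⊆ ℝⁿ`: a bounded open connected set whose boundary is a C²
hypersurface, described by a global C² defining function with nonvanishing gradient
on the boundary. -/
structure C2Domain (n : ℕ) where
  carrier : Set (En n)
  phi : En n → ℝ
  phi_smooth : ContDiff ℝ 2 phi
  carrier_eq : carrier = {x | phi x < 0}
  grad_ne : ∀ x ∈ frontier carrier, gradient phi x ≠ 0
  bounded : IsBounded carrier
  connected : IsConnected carrier

/-- The outward unit normal `ν` on `∂Ω`. -/
def C2Domain.nu {n : ℕ} (D : C2Domain n) (x : En n) : En n :=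
  ‖gradient D.phi x‖⁻¹ • gradient D.phi x

/-- The normal derivative `∂u/∂ν` at a boundary point (the derivative from inside). -/
def normalDeriv {n : ℕ} (D : C2Domain n) (u : En n → ℝ) (x : En n) : ℝ :=
  fderivWithin ℝ u (closure D.carrier) x (D.nu x)

/-- `Ω` is strictly star-shaped with respect to `z₀`. -/
def C2Domain.StrictlyStarShapedAt {n : ℕ} (D : C2Domain n) (z₀ : En n) : Prop :=
  z₀ ∈ D.carrier ∧ ∀ x ∈ frontier D.carrier, 0 < ⟪x - z₀, D.nu x⟫

/-- `Ω` is strictly star-shaped. -/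
def C2Domain.StrictlyStarShaped {n : ℕ} (D : C2Domain n) : Prop :=
  ∃ z₀, D.StrictlyStarShapedAt z₀

/-- The Pohozaev boundary term `∫_{∂Ω} (∂u/∂ν)² (x·ν(x)) dS`, with `dS` the
`(n-1)`-dimensional Hausdorff measure on `∂Ω`. -/
def pohozaevBoundary {n : ℕ} (D : C2Domain n) (u : En n → ℝ) : ℝ :=
  ∫ x in frontier D.carrier, (normalDeriv D u x) ^ 2 * ⟪x, D.nu x⟫ ∂ μH[(n : ℝ) - 1]

/-- Condition (★). -/
def StarCond (n : ℕ) (s : ℝ) (Ω : Set (En n)) (u : En n → ℝ) : Prop :=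
  ∃ C > 0, ∃ γ ∈ Set.Ioo (0:ℝ) 1, ∀ x ∈ Ω,
    ‖hess n u x‖ ≤ C * infDist x (frontier Ω) ^ (γ - 1) ∧
    |u x| ≤ C * infDist x (frontier Ω) ∧
    |fracLap n s u x| ≤ C * (1 + (if s < 1/2 then 1 else 0)
      + (if s = 1/2 then |Real.log (infDist x (frontier Ω))| else 0)
      + (if 1/2 < s then infDist x (frontier Ω) ^ (1 - 2*s) else 0))
/-!
Write `𝔤(x) = c ∫ D_x(z) ‖z‖^{-(n+s)} dz` with `D_x(z) = u(x) - u(x + z)` and split the integral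
at a radius `r`. If `|D| ≤ c₁‖z‖` on the ball `B_r` and `|D| ≤ c₂` outside it, polar coordinates
bound the two pieces by `c₁ r^{1-s}/(1-s)` and `c₂ r^{-s}/s`, times the area `n |B_1|` of the unit
sphere. For `𝔤(x)` itself take `r = 1`, `c₁ = L`, `c₂ = 2M`. For `𝔤(x) - 𝔤(y)` take
`r = ‖x - y‖`: the Lipschitz bound gives `|D_x - D_y| ≤ 2L‖z‖` near the origin, and
regrouping as `(u x - u y) - (u (x + z) - u (y + z))` gives `|D_x - D_y| ≤ 2L‖x - y‖` far from it,
so both pieces are multiples of `‖x - y‖^{1-s}`.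
-/

open Module

lemma pow_mul_rpow_eq_rpow_sub_one_add {y : ℝ} (hy : 0 < y) {k : ℕ} (hk : 1 ≤ k) (a : ℝ) :
    y ^ (k - 1) * y ^ a = y ^ ((k : ℝ) - 1 + a) := by
  rw [rpow_add hy, ← rpow_natCast, Nat.cast_sub hk, Nat.cast_one]

section RadialIntegrals

variable {E : Type*} [NormedAddCommGroup E] [NormedSpace ℝ E] [FiniteDimensional ℝ E]
  [MeasurableSpace E] [BorelSpace E] [Nontrivial E] (μ : Measure E) [μ.IsAddHaarMeasure]

lemma integral_norm_rpow_ball {a r : ℝ} (ha : -(finrank ℝ E : ℝ) < a) (hr : 0 ≤ r) :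
    ∫ z in ball (0 : E) r, ‖z‖ ^ a ∂μ =
      finrank ℝ E * μ.real (ball 0 1) / (finrank ℝ E + a) * r ^ ((finrank ℝ E : ℝ) + a) := by
  have hd : 1 ≤ finrank ℝ E := finrank_pos
  have hradial : (ball (0 : E) r).indicator (‖·‖ ^ a) = fun z ↦ (Iio r).indicator (· ^ a) ‖z‖ := by
    ext z
    simp only [indicator, mem_ball_zero_iff, mem_Iio]
  have hprofile : ∫ y in Ioi (0 : ℝ), y ^ (finrank ℝ E - 1) • (Iio r).indicator (· ^ a) y =
      r ^ ((finrank ℝ E : ℝ) + a) / (finrank ℝ E + a) := calc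
    _ = ∫ y in Ioo 0 r, y ^ ((finrank ℝ E : ℝ) - 1 + a) := by
      simp_rw [smul_eq_mul, ← indicator_mul_right _ fun y : ℝ ↦ y ^ (finrank ℝ E - 1)]
      rw [setIntegral_indicator measurableSet_Iio, Ioi_inter_Iio]
      exact setIntegral_congr_fun measurableSet_Ioo
        fun y hy ↦ pow_mul_rpow_eq_rpow_sub_one_add hy.1 hd a
    _ = ∫ y in (0)..r, y ^ ((finrank ℝ E : ℝ) - 1 + a) := by
      rw [intervalIntegral.integral_of_le hr, integral_Ioc_eq_integral_Ioo]
    _ = _ := by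
      rw [integral_rpow (Or.inl (by linarith)), zero_rpow (by linarith)]
      ring_nf
  rw [← integral_indicator measurableSet_ball, hradial, integral_fun_norm_addHaar, hprofile,
    nsmul_eq_mul, smul_eq_mul]
  field_simp

lemma integral_norm_rpow_compl_ball {a r : ℝ} (ha : a < -(finrank ℝ E : ℝ)) (hr : 0 < r) :
    ∫ z in (ball (0 : E) r)ᶜ, ‖z‖ ^ a ∂μ =
      finrank ℝ E * μ.real (ball 0 1) / -(finrank ℝ E + a) * r ^ ((finrank ℝ E : ℝ) + a) := by
  have hd : 1 ≤ finrank ℝ E := finrank_pos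
  have hradial : (ball (0 : E) r)ᶜ.indicator (‖·‖ ^ a) = fun z ↦ (Ici r).indicator (· ^ a) ‖z‖ := by
    ext z
    simp only [indicator, mem_compl_iff, mem_ball_zero_iff, not_lt, mem_Ici]
  have hprofile : ∫ y in Ioi (0 : ℝ), y ^ (finrank ℝ E - 1) • (Ici r).indicator (· ^ a) y =
      r ^ ((finrank ℝ E : ℝ) + a) / -(finrank ℝ E + a) := calc
    _ = ∫ y in Ioi r, y ^ ((finrank ℝ E : ℝ) - 1 + a) := by
      simp_rw [smul_eq_mul, ← indicator_mul_right _ fun y : ℝ ↦ y ^ (finrank ℝ E - 1)]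
      rw [setIntegral_indicator measurableSet_Ici,
        inter_eq_right.2 (Ici_subset_Ioi.2 hr), integral_Ici_eq_integral_Ioi]
      exact setIntegral_congr_fun measurableSet_Ioi
        fun y hy ↦ pow_mul_rpow_eq_rpow_sub_one_add (hr.trans hy) hd a
    _ = _ := by
      rw [integral_Ioi_rpow_of_lt (by linarith) hr, div_neg, neg_div]
      ring_nf
  rw [← integral_indicator measurableSet_ball.compl, hradial, integral_fun_norm_addHaar, hprofile,
    nsmul_eq_mul, smul_eq_mul]
  field_simp

lemma integrableOn_norm_rpow_ball {a r : ℝ} (ha : -(finrank ℝ E : ℝ) < a) (hr : 0 < r) :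
    IntegrableOn (‖·‖ ^ a) (ball (0 : E) r) μ := by
  have hd : (0 : ℝ) < finrank ℝ E := by exact_mod_cast finrank_pos
  have hV : 0 < μ.real (ball (0 : E) 1) :=
    ENNReal.toReal_pos (measure_ball_pos μ 0 one_pos).ne' measure_ball_lt_top.ne
  -- the integral computed above is positive, while a non-integrable function has integral `0`
  refine .of_integral_ne_zero ?_
  rw [integral_norm_rpow_ball μ ha hr.le]
  exact (mul_pos (div_pos (mul_pos hd hV) (by linarith)) (rpow_pos_of_pos hr _)).ne'

lemma integrableOn_norm_rpow_compl_ball {a r : ℝ} (ha : a < -(finrank ℝ E : ℝ)) (hr : 0 < r) :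
    IntegrableOn (‖·‖ ^ a) (ball (0 : E) r)ᶜ μ := by
  have hd : (0 : ℝ) < finrank ℝ E := by exact_mod_cast finrank_pos
  have hV : 0 < μ.real (ball (0 : E) 1) :=
    ENNReal.toReal_pos (measure_ball_pos μ 0 one_pos).ne' measure_ball_lt_top.ne
  refine .of_integral_ne_zero ?_
  rw [integral_norm_rpow_compl_ball μ ha hr]
  exact (mul_pos (div_pos (mul_pos hd hV) (by linarith)) (rpow_pos_of_pos hr _)).ne'

end RadialIntegrals

lemma abs_div_rpow_le_mul_rpow_one_sub {A c t : ℝ} (p : ℝ) (ht : 0 ≤ t) (hc : 0 ≤ c)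
    (hA : |A| ≤ c * t) : |A / t ^ p| ≤ c * t ^ (1 - p) := by
  rcases ht.eq_or_lt with rfl | ht
  · have hA : A = 0 := abs_nonpos_iff.1 (by simpa using hA)
    simpa [hA] using mul_nonneg hc (rpow_nonneg le_rfl (1 - p))
  · rw [abs_div, abs_of_pos (rpow_pos_of_pos ht p), rpow_sub ht, rpow_one, mul_div_assoc']
    gcongr

lemma abs_div_rpow_le_mul_rpow_neg {A c t : ℝ} (p : ℝ) (ht : 0 < t) (hA : |A| ≤ c) :
    |A / t ^ p| ≤ c * t ^ (-p) := by
  rw [abs_div, abs_of_pos (rpow_pos_of_pos ht p), rpow_neg ht.le, ← div_eq_mul_inv]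
  gcongr

lemma LipschitzWith.abs_sub_le_mul_norm_sub {E : Type*} [SeminormedAddCommGroup E] {L : ℝ≥0}
    {u : E → ℝ} (hu : LipschitzWith L u) (x y : E) : |u x - u y| ≤ L * ‖x - y‖ := by
  simpa [Real.dist_eq, dist_eq_norm] using hu.dist_le_mul x y

section SplitEstimate

variable {E : Type*} [NormedAddCommGroup E] [NormedSpace ℝ E] [FiniteDimensional ℝ E]
  [MeasurableSpace E] [BorelSpace E] [Nontrivial E] (μ : Measure E) [μ.IsAddHaarMeasure]
  {F : E → ℝ} {s r c₁ c₂ : ℝ}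

lemma integrable_of_abs_le_ball_compl (hs₀ : 0 < s) (hs₁ : s < 1) (hr : 0 < r)
    (hF : AEStronglyMeasurable F μ)
    (hF₁ : ∀ z ∈ ball (0 : E) r, |F z| ≤ c₁ * ‖z‖ ^ (1 - (finrank ℝ E + s)))
    (hF₂ : ∀ z ∈ (ball (0 : E) r)ᶜ, |F z| ≤ c₂ * ‖z‖ ^ (-(finrank ℝ E + s))) :
    Integrable F μ := by
  rw [← integrableOn_univ, ← union_compl_self (ball 0 r)]
  have hball := integrableOn_norm_rpow_ball μ (a := 1 - (finrank ℝ E + s)) (by linarith) hr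
  have hcompl := integrableOn_norm_rpow_compl_ball μ (a := -(finrank ℝ E + s)) (by linarith) hr
  exact .union ((hball.const_mul c₁).mono' hF.restrict
      (ae_restrict_of_forall_mem measurableSet_ball hF₁))
    ((hcompl.const_mul c₂).mono' hF.restrict
      (ae_restrict_of_forall_mem measurableSet_ball.compl hF₂))

lemma abs_integral_le_of_abs_le_ball_compl (hs₀ : 0 < s) (hs₁ : s < 1) (hr : 0 < r)
    (hF : AEStronglyMeasurable F μ)
    (hF₁ : ∀ z ∈ ball (0 : E) r, |F z| ≤ c₁ * ‖z‖ ^ (1 - (finrank ℝ E + s)))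
    (hF₂ : ∀ z ∈ (ball (0 : E) r)ᶜ, |F z| ≤ c₂ * ‖z‖ ^ (-(finrank ℝ E + s))) :
    |∫ z, F z ∂μ| ≤
      (c₁ * r ^ (1 - s) / (1 - s) + c₂ * r ^ (-s) / s) * (finrank ℝ E * μ.real (ball 0 1)) := by
  have hFi := integrable_of_abs_le_ball_compl μ hs₀ hs₁ hr hF hF₁ hF₂
  have hball := integral_norm_rpow_ball μ (a := 1 - (finrank ℝ E + s)) (by linarith) hr.le
  have hcompl := integral_norm_rpow_compl_ball μ (a := -(finrank ℝ E + s)) (by linarith) hr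
  have hball' := integrableOn_norm_rpow_ball μ (a := 1 - (finrank ℝ E + s)) (by linarith) hr
  have hcompl' := integrableOn_norm_rpow_compl_ball μ (a := -(finrank ℝ E + s)) (by linarith) hr
  calc |∫ z, F z ∂μ| ≤ ∫ z, |F z| ∂μ := abs_integral_le_integral_abs
    _ = (∫ z in ball 0 r, |F z| ∂μ) + ∫ z in (ball 0 r)ᶜ, |F z| ∂μ :=
      (integral_add_compl measurableSet_ball hFi.abs).symm
    _ ≤ (∫ z in ball 0 r, c₁ * ‖z‖ ^ (1 - (finrank ℝ E + s)) ∂μ)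
        + ∫ z in (ball 0 r)ᶜ, c₂ * ‖z‖ ^ (-(finrank ℝ E + s)) ∂μ :=
      add_le_add
        (setIntegral_mono_on hFi.abs.integrableOn (hball'.const_mul c₁) measurableSet_ball hF₁)
        (setIntegral_mono_on hFi.abs.integrableOn (hcompl'.const_mul c₂) measurableSet_ball.compl
          hF₂)
    _ = _ := by
      rw [integral_const_mul, integral_const_mul, hball, hcompl]
      ring_nf

end SplitEstimate

lemma norm_pos_of_mem_compl_ball {E : Type*} [SeminormedAddCommGroup E] {z : E} {r : ℝ}
    (hr : 0 < r) (hz : z ∈ (ball (0 : E) r)ᶜ) : 0 < ‖z‖ :=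
  hr.trans_le (by simpa using hz)

section DifferenceQuotientBounds

variable {E : Type*} [SeminormedAddCommGroup E] {M : ℝ} {L : ℝ≥0} {u : E → ℝ}

lemma abs_sub_div_norm_rpow_le_of_lipschitzWith (hu : LipschitzWith L u) (x z : E) (p : ℝ) :
    |(u x - u (x + z)) / ‖z‖ ^ p| ≤ L * ‖z‖ ^ (1 - p) :=
  abs_div_rpow_le_mul_rpow_one_sub p (norm_nonneg z) L.coe_nonneg
    (by simpa using hu.abs_sub_le_mul_norm_sub x (x + z))

lemma abs_sub_div_norm_rpow_le_of_abs_le (hM : ∀ x, |u x| ≤ M) (x : E) {z : E} (hz : 0 < ‖z‖)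
    (p : ℝ) : |(u x - u (x + z)) / ‖z‖ ^ p| ≤ 2 * M * ‖z‖ ^ (-p) :=
  abs_div_rpow_le_mul_rpow_neg p hz
    ((abs_sub _ _).trans (by linarith [hM x, hM (x + z)]))

end DifferenceQuotientBounds

lemma aestronglyMeasurable_sub_div_norm_rpow {E : Type*} [SeminormedAddCommGroup E]
    [MeasurableSpace E] [OpensMeasurableSpace E] (μ : Measure E) {u : E → ℝ} (hu : Continuous u)
    (x : E) (p : ℝ) : AEStronglyMeasurable (fun z ↦ (u x - u (x + z)) / ‖z‖ ^ p) μ :=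
  ((continuous_const.sub (hu.comp (continuous_const_add x))).measurable.div
    (continuous_norm.measurable.pow_const p)).aestronglyMeasurable

section FractionalDifferenceQuotient

variable {E : Type*} [NormedAddCommGroup E] [NormedSpace ℝ E] [FiniteDimensional ℝ E]
  [MeasurableSpace E] [BorelSpace E] [Nontrivial E] (μ : Measure E) [μ.IsAddHaarMeasure]
  {s M : ℝ} {L : ℝ≥0} {u : E → ℝ}

lemma integrable_sub_div_norm_rpow (hs₀ : 0 < s) (hs₁ : s < 1) (hM : ∀ x, |u x| ≤ M)
    (hu : LipschitzWith L u) (x : E) :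
    Integrable (fun z ↦ (u x - u (x + z)) / ‖z‖ ^ ((finrank ℝ E : ℝ) + s)) μ :=
  integrable_of_abs_le_ball_compl μ hs₀ hs₁ one_pos
    (aestronglyMeasurable_sub_div_norm_rpow μ hu.continuous x _)
    (fun z _ ↦ abs_sub_div_norm_rpow_le_of_lipschitzWith hu x z _)
    (fun _ hz ↦ abs_sub_div_norm_rpow_le_of_abs_le hM x (norm_pos_of_mem_compl_ball one_pos hz) _)

lemma abs_integral_sub_div_norm_rpow_le (hs₀ : 0 < s) (hs₁ : s < 1) (hM : ∀ x, |u x| ≤ M)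
    (hu : LipschitzWith L u) (x : E) :
    |∫ z, (u x - u (x + z)) / ‖z‖ ^ ((finrank ℝ E : ℝ) + s) ∂μ| ≤
      2 * (1 / (1 - s) + 1 / s) * (finrank ℝ E * μ.real (ball 0 1)) * (M + L) := by
  have hM₀ : 0 ≤ M := (abs_nonneg _).trans (hM 0)
  refine (abs_integral_le_of_abs_le_ball_compl μ hs₀ hs₁ one_pos
    (aestronglyMeasurable_sub_div_norm_rpow μ hu.continuous x _)
    (fun z _ ↦ abs_sub_div_norm_rpow_le_of_lipschitzWith hu x z _)
    (fun _ hz ↦ abs_sub_div_norm_rpow_le_of_abs_le hM x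
      (norm_pos_of_mem_compl_ball one_pos hz) _)).trans ?_
  calc (L * 1 ^ (1 - s) / (1 - s) + 2 * M * 1 ^ (-s) / s) * (finrank ℝ E * μ.real (ball 0 1))
      ≤ (2 * (M + L) / (1 - s) + 2 * (M + L) / s) * (finrank ℝ E * μ.real (ball 0 1)) := by
        simp only [one_rpow, mul_one]
        gcongr <;> linarith [L.coe_nonneg]
    _ = _ := by ring

lemma abs_integral_sub_div_norm_rpow_sub_le (hs₀ : 0 < s) (hs₁ : s < 1) (hM : ∀ x, |u x| ≤ M)
    (hu : LipschitzWith L u) (x y : E) :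
    |(∫ z, (u x - u (x + z)) / ‖z‖ ^ ((finrank ℝ E : ℝ) + s) ∂μ) -
        ∫ z, (u y - u (y + z)) / ‖z‖ ^ ((finrank ℝ E : ℝ) + s) ∂μ| ≤
      2 * (1 / (1 - s) + 1 / s) * (finrank ℝ E * μ.real (ball 0 1)) * L * ‖x - y‖ ^ (1 - s) := by
  rcases eq_or_ne x y with rfl | hxy
  · rw [sub_self, abs_zero, sub_self, norm_zero, zero_rpow (by linarith), mul_zero]
  have hr : 0 < ‖x - y‖ := norm_pos_iff.2 (sub_ne_zero.2 hxy)
  have hx := integrable_sub_div_norm_rpow μ hs₀ hs₁ hM hu x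
  have hy := integrable_sub_div_norm_rpow μ hs₀ hs₁ hM hu y
  have hsplit := abs_integral_le_of_abs_le_ball_compl μ hs₀ hs₁ hr
    (hx.aestronglyMeasurable.sub hy.aestronglyMeasurable) (c₁ := 2 * L) (c₂ := 2 * L * ‖x - y‖)
    (fun z _ ↦ ?near) (fun z hz ↦ ?far)
  case near =>
    rw [Pi.sub_apply, ← sub_div]
    refine abs_div_rpow_le_mul_rpow_one_sub _ (norm_nonneg z) (by positivity) ?_
    have hx := hu.abs_sub_le_mul_norm_sub x (x + z)
    have hy := hu.abs_sub_le_mul_norm_sub y (y + z)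
    simp only [sub_add_cancel_left, norm_neg] at hx hy
    linarith [abs_sub (u x - u (x + z)) (u y - u (y + z))]
  case far =>
    rw [Pi.sub_apply, ← sub_div]
    refine abs_div_rpow_le_mul_rpow_neg _ (norm_pos_of_mem_compl_ball hr hz) ?_
    have hxy := hu.abs_sub_le_mul_norm_sub x y
    have hxyz := hu.abs_sub_le_mul_norm_sub (x + z) (y + z)
    rw [add_sub_add_right_eq_sub] at hxyz
    rw [show u x - u (x + z) - (u y - u (y + z)) = u x - u y - (u (x + z) - u (y + z)) by ring]
    linarith [abs_sub (u x - u y) (u (x + z) - u (y + z))]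
  have hpow : ‖x - y‖ * ‖x - y‖ ^ (-s) = ‖x - y‖ ^ (1 - s) := by
    rw [mul_comm, ← rpow_add_one hr.ne', neg_add_eq_sub]
  rw [← integral_sub hx hy]
  refine hsplit.trans_eq ?_
  linear_combination (2 * L / s * (finrank ℝ E * μ.real (ball (0 : E) 1))) * hpow

end FractionalDifferenceQuotient

/-- Lemma 2.3(i): `(-Δ)^{s/2}u ∈ C^{1-s}(ℝⁿ)` for bounded Lipschitz `u`:
there is `C = C(n,s)` such that for every bounded Lipschitz `u` (with `|u| ≤ M` and
Lipschitz constant `L`), `𝔤 = (-Δ)^{s/2}u` satisfies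
`|𝔤(x) - 𝔤(y)| ≤ C‖u‖_{C^{0,1}}|x-y|^{1-s}` for all `x, y`, and `sup|𝔤| ≤ C‖u‖_{C^{0,1}}`,
i.e. `‖𝔤‖_{C^{1-s}(ℝⁿ)} ≤ C‖u‖_{C^{0,1}(ℝⁿ)}` (with `‖u‖_{C^{0,1}} ≤ M + L`). -/
theorem fracHalf_holder (n : ℕ) (hn : 1 ≤ n) (s : ℝ) (hs : s ∈ Set.Ioo (0:ℝ) 1) :
    ∃ C > (0:ℝ), ∀ (u : En n → ℝ) (M : ℝ) (L : ℝ≥0),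
      (∀ x, |u x| ≤ M) → LipschitzWith L u →
      (∀ x : En n, |fracHalf n s u x| ≤ C * (M + L)) ∧
      ∀ x y : En n,
        |fracHalf n s u x - fracHalf n s u y| ≤ C * (M + L) * ‖x - y‖ ^ (1 - s) := by
  obtain ⟨hs₀, hs₁⟩ := hs
  have : Nontrivial (En n) :=
    Module.nontrivial_of_finrank_pos (R := ℝ) (by rw [finrank_euclideanSpace_fin]; omega)
  set c := |cK n (s / 2)|
  set K : ℝ := 2 * (1 / (1 - s) + 1 / s) * (n * volume.real (ball (0 : En n) 1))
  refine ⟨c * K + 1, by positivity, fun u M L hM hu ↦ ?_⟩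
  have hM₀ : 0 ≤ M := (abs_nonneg _).trans (hM 0)
  refine ⟨fun x ↦ ?_, fun x y ↦ ?_⟩
  · have hsup := abs_integral_sub_div_norm_rpow_le volume hs₀ hs₁ hM hu x
    rw [finrank_euclideanSpace_fin] at hsup
    rw [fracHalf, abs_mul]
    calc _ ≤ c * (K * (M + L)) := by gcongr
      _ ≤ (c * K + 1) * (M + L) := by rw [← mul_assoc]; gcongr; linarith
  · have hholder := abs_integral_sub_div_norm_rpow_sub_le volume hs₀ hs₁ hM hu x y
    rw [finrank_euclideanSpace_fin] at hholder
    rw [fracHalf, fracHalf, ← mul_sub, abs_mul]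
    calc _ ≤ c * (K * L * ‖x - y‖ ^ (1 - s)) := by gcongr
      _ ≤ (c * K + 1) * (M + L) * ‖x - y‖ ^ (1 - s) := by
        rw [← mul_assoc, ← mul_assoc]
        gcongr <;> linarith
end
end

section
/- Let n ≥ 1, s ∈ (0,1), and let Ω ⊂ ℝⁿ be a bounded C² domain that is strictly star-shaped with respect to the origin. Let u ∈ C²(Ω) ∩ C¹(cl Ω) ∩ C^{0,1}(ℝⁿ) with u = 0 in Ωᶜ satisfy condition (★). Then x ↦ (−Δ)ˢu(x) is Lebesgue integrable on Ω, and lim_{λ→1⁺} ∫_Ω ((u(λx) − u(x))/(λ−1)) (−Δ)ˢu(x) dx = ∫_Ω (x·∇u(x)) (−Δ)ˢu(x) dx. -/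
open MeasureTheory Real Set Metric Bornology Filter
open scoped RealInnerProductSpace ENNReal NNReal Pointwise

noncomputable section

/-!
Integrability of `(-Δ)ˢu` reduces, through (★), to integrability over `Ω` of `d^a` with
`-1 < a ≤ 0`, where `d = dist(·, ∂Ω)` (and of `|log d| ≤ 2 d^(-1/2) + d`). Strict
star-shapedness with respect to `0` and compactness of `∂Ω` make `Ω` star-shaped with respect
to every point of a ball `B(0, ρ)`; then `B(t x, (1 - t) ρ) ⊆ Ω` for `x ∈ Ω`, so the collar
`{d < ε}` misses `(1 - ε/ρ) Ω` and has measure `≤ (n ε / ρ) |Ω|`. Summing over the dyadic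
layers `{d ≈ 2⁻ᵏ}` gives `∫_Ω d^a < ∞`. The limit is dominated convergence: Lipschitz
continuity bounds the difference quotients by `L ‖x‖`, and by Rademacher's theorem they converge
almost everywhere to `x · ∇u(x)`.
-/

open Topology Module

theorem exists_last_zero {g : ℝ → ℝ} (hg : Continuous g) {a b : ℝ} (hab : a ≤ b)
    (ha : 0 ≤ g a) (hb : g b < 0) : ∃ c ∈ Ico a b, g c = 0 ∧ ∀ x ∈ Ioc c b, g x < 0 := by
  set T := {x ∈ Icc a b | 0 ≤ g x}
  have hT : IsCompact T := isCompact_Icc.inter_right (isClosed_le continuous_const hg)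
  have hcT : sSup T ∈ T := hT.sSup_mem ⟨a, ⟨le_rfl, hab⟩, ha⟩
  set c := sSup T
  have hneg : ∀ x ∈ Ioc c b, g x < 0 := fun x hx => by
    by_contra! hgx
    exact (le_csSup hT.bddAbove ⟨⟨hcT.1.1.trans hx.1.le, hx.2⟩, hgx⟩).not_gt hx.1
  have hcb : c < b := hcT.1.2.lt_of_ne fun h => (h ▸ hcT.2).not_gt hb
  have hgc : g c ≤ 0 := le_of_tendsto ((hg.tendsto c).mono_left nhdsWithin_le_nhds)
    (eventually_of_mem (Ioo_mem_nhdsGT hcb) fun x hx => (hneg x (Ioo_subset_Ioc_self hx)).le)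
  exact ⟨c, ⟨hcT.1.1, hcb⟩, hgc.antisymm hcT.2, hneg⟩

theorem HasDerivAt.nonpos_of_eventually_le_right {g : ℝ → ℝ} {g' c : ℝ}
    (hg : HasDerivAt g g' c) (hle : ∀ᶠ x in 𝓝[>] c, g x ≤ g c) : g' ≤ 0 := by
  refine le_of_tendsto (hg.tendsto_slope.mono_left (nhdsGT_le_nhdsNE c)) ?_
  filter_upwards [hle, self_mem_nhdsWithin] with x hx hcx
  rw [slope_def_field]
  exact div_nonpos_of_nonpos_of_nonneg (sub_nonpos.2 hx) (sub_nonneg.2 (le_of_lt hcx))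

theorem abs_log_le_two_mul_rpow_add {t : ℝ} (ht : 0 < t) :
    |log t| ≤ 2 * t ^ (-(1 / 2) : ℝ) + t := by
  rcases le_or_gt t 1 with h | h
  · have := abs_log_mul_self_rpow_lt t (1 / 2) ht h (by norm_num)
    rw [abs_mul, abs_of_pos (rpow_pos_of_pos ht _), ← lt_div_iff₀ (rpow_pos_of_pos ht _)] at this
    rw [rpow_neg ht.le, ← div_eq_mul_inv]
    norm_num at this ⊢
    linarith
  · rw [abs_of_nonneg (log_nonneg h.le)]
    linarith [log_le_sub_one_of_pos ht, rpow_nonneg ht.le (-(1 / 2) : ℝ)]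

theorem exists_rpow_le_dyadic {t r a : ℝ} (ht : 0 < t) (htr : t ≤ r) (ha : a ≤ 0) :
    ∃ k : ℕ, t ≤ r * (1 / 2) ^ k ∧ t ^ a ≤ (r / 2) ^ a * ((1 / 2) ^ a) ^ k := by
  have hr : 0 < r := ht.trans_le htr
  obtain ⟨k, hk_lt, hk_le⟩ := exists_nat_pow_near_of_lt_one (div_pos ht hr)
    ((div_le_one hr).2 htr) (by norm_num : (0 : ℝ) < 1 / 2) (by norm_num)
  rw [lt_div_iff₀ hr] at hk_lt
  rw [div_le_iff₀ hr] at hk_le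
  refine ⟨k, by linarith, ?_⟩
  rw [rpow_pow_comm (by norm_num), ← mul_rpow (by positivity) (by positivity)]
  exact rpow_le_rpow_of_nonpos (by positivity) (by rw [pow_succ] at hk_lt; linarith) ha

theorem tsum_ofReal_mul_lt_top_of_le_geometric {m : ℕ → ℝ≥0∞} {A B a : ℝ} (hA : 0 ≤ A)
    (ha : -1 < a) (hm : ∀ k, m k ≤ ENNReal.ofReal (B * (1 / 2) ^ k)) :
    ∑' k, ENNReal.ofReal (A * ((1 / 2) ^ a) ^ k) * m k < ∞ := by
  set q : ℝ := (1 / 2) ^ a * (1 / 2)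
  have hq : ENNReal.ofReal q < 1 := by
    have : (1 / 2 : ℝ) ^ a < (1 / 2) ^ (-1 : ℝ) :=
      rpow_lt_rpow_of_exponent_gt (by norm_num) (by norm_num) ha
    norm_num at this
    exact ENNReal.ofReal_lt_one.2 (by simp only [q]; linarith)
  have hterm : ∀ k, ENNReal.ofReal (A * ((1 / 2) ^ a) ^ k) * m k ≤
      ENNReal.ofReal (A * B) * ENNReal.ofReal q ^ k := fun k => calc
    _ ≤ ENNReal.ofReal (A * ((1 / 2) ^ a) ^ k) * ENNReal.ofReal (B * (1 / 2) ^ k) := by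
      gcongr; exact hm k
    _ = ENNReal.ofReal (A * B * q ^ k) := by
      rw [← ENNReal.ofReal_mul (by positivity), mul_pow]
      ring_nf
    _ = _ := by rw [ENNReal.ofReal_mul' (by positivity), ENNReal.ofReal_pow (by positivity)]
  refine (ENNReal.tsum_le_tsum hterm).trans_lt ?_
  rw [ENNReal.tsum_mul_left]
  exact ENNReal.mul_lt_top ENNReal.ofReal_lt_top (tsum_geometric_lt_top.2 hq)

theorem integrableOn_rpow_of_measure_lt_le {X : Type*} [MeasurableSpace X] {μ : Measure X}
    {s : Set X} {f : X → ℝ} (hs : MeasurableSet s) (hμs : μ s ≠ ∞) (hf : Measurable f)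
    (hf_pos : ∀ x ∈ s, 0 < f x) {K ρ : ℝ} (hρ : 0 < ρ)
    (hcollar : ∀ ε ∈ Ioc 0 ρ, μ {x ∈ s | f x < ε} ≤ ENNReal.ofReal (K * ε))
    {a : ℝ} (ha : -1 < a) (ha0 : a ≤ 0) :
    IntegrableOn (fun x => f x ^ a) s μ := by
  set r := ρ / 2 with hr
  set T : ℕ → Set X := fun k => {x ∈ s | f x < ρ * (1 / 2) ^ k}
  set c : ℕ → ℝ := fun k => (r / 2) ^ a * ((1 / 2) ^ a) ^ k
  have hT : ∀ k, MeasurableSet (T k) := fun k => hs.inter (measurableSet_lt hf measurable_const)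
  have hpt : ∀ x ∈ s, ENNReal.ofReal (f x ^ a) ≤
      ENNReal.ofReal (r ^ a) + ∑' k, (T k).indicator (fun _ => ENNReal.ofReal (c k)) x := by
    intro x hx
    rcases lt_or_ge r (f x) with h | h
    · exact le_add_right (ENNReal.ofReal_le_ofReal
        (rpow_le_rpow_of_nonpos (by positivity) h.le ha0))
    obtain ⟨k, hxk, hk⟩ := exists_rpow_le_dyadic (hf_pos x hx) h ha0
    have hxT : x ∈ T k := ⟨hx, hxk.trans_lt (by gcongr; linarith)⟩
    refine le_add_left (le_trans ?_ (ENNReal.le_tsum k))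
    rw [indicator_of_mem hxT]
    exact ENNReal.ofReal_le_ofReal hk
  refine ⟨(hf.pow_const a).aestronglyMeasurable, ?_⟩
  rw [hasFiniteIntegral_iff_ofReal
    ((ae_restrict_mem hs).mono fun x hx => rpow_nonneg (hf_pos x hx).le a)]
  calc ∫⁻ x in s, ENNReal.ofReal (f x ^ a) ∂μ
      ≤ ∫⁻ x in s, (ENNReal.ofReal (r ^ a) +
          ∑' k, (T k).indicator (fun _ => ENNReal.ofReal (c k)) x) ∂μ :=
        setLIntegral_mono' hs hpt
    _ = ENNReal.ofReal (r ^ a) * μ s + ∑' k, ENNReal.ofReal (c k) * μ (T k) := by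
        rw [lintegral_add_left measurable_const,
          lintegral_tsum fun k => (measurable_const.indicator (hT k)).aemeasurable,
          setLIntegral_const]
        congr 1
        refine tsum_congr fun k => ?_
        rw [lintegral_indicator_const (hT k), Measure.restrict_apply (hT k),
          inter_eq_left.2 (sep_subset _ _)]
    _ < ∞ := ENNReal.add_lt_top.2 ⟨ENNReal.mul_lt_top ENNReal.ofReal_lt_top hμs.lt_top,
        tsum_ofReal_mul_lt_top_of_le_geometric (B := K * ρ) (by positivity) ha fun k => by
          rw [mul_assoc]
          exact hcollar _ ⟨by positivity,
            mul_le_of_le_one_right hρ.le (pow_le_one₀ (by norm_num) (by norm_num))⟩⟩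

/-- The right-hand side of the bound on `|(-Δ)ˢu(x)|` in condition (★), with `C = 1` and
`t = dist(x, ∂Ω)`. -/
def starWeight (s t : ℝ) : ℝ :=
  1 + (if s < 1/2 then 1 else 0) + (if s = 1/2 then |Real.log t| else 0)
    + (if 1/2 < s then t ^ (1 - 2*s) else 0)

theorem integrableOn_starWeight_comp {X : Type*} [MeasurableSpace X] {μ : Measure X}
    {Ω : Set X} (hΩ : MeasurableSet Ω) (hμΩ : μ Ω ≠ ∞) {f : X → ℝ} (hf_pos : ∀ x ∈ Ω, 0 < f x)
    (hf : IntegrableOn f Ω μ)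
    (hf_rpow : ∀ a : ℝ, -1 < a → a ≤ 0 → IntegrableOn (fun x => f x ^ a) Ω μ)
    {s : ℝ} (hs : s < 1) : IntegrableOn (fun x => starWeight s (f x)) Ω μ := by
  have hconst : ∀ c : ℝ, IntegrableOn (fun _ => c) Ω μ := fun c => integrableOn_const hμΩ
  have hlog : IntegrableOn (fun x => |log (f x)|) Ω μ := by
    refine Integrable.mono'
      (((hf_rpow (-(1 / 2)) (by norm_num) (by norm_num)).const_mul 2).add hf)
      hf.aemeasurable.log.abs.aestronglyMeasurable ?_
    filter_upwards [ae_restrict_mem hΩ] with x hx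
    rw [Real.norm_eq_abs, abs_abs]
    exact abs_log_le_two_mul_rpow_add (hf_pos x hx)
  refine (((hconst 1).add ?_).add ?_).add ?_
  · split_ifs <;> exact hconst _
  · by_cases h : s = 1 / 2 <;> simp only [h, if_true, if_false]
    · exact hlog
    · exact hconst 0
  · by_cases h : 1 / 2 < s <;> simp only [h, if_true, if_false]
    · exact hf_rpow _ (by linarith) (by linarith)
    · exact hconst 0

theorem le_infDist_frontier_of_ball_subset {X : Type*} [PseudoMetricSpace X] {s : Set X}
    {z : X} {r : ℝ} (hF : (frontier s).Nonempty) (h : ball z r ⊆ s) :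
    r ≤ infDist z (frontier s) := by
  refine (le_infDist hF).2 fun y hy => ?_
  by_contra! hlt
  exact hy.2 (interior_maximal h isOpen_ball (mem_ball'.2 hlt))

section NormedSpace

variable {E : Type*} [NormedAddCommGroup E] [NormedSpace ℝ E]

theorem ball_smul_subset_of_starConvex {s : Set E} {ρ : ℝ}
    (hs : ∀ b ∈ ball (0 : E) ρ, StarConvex ℝ b s) {x : E} (hx : x ∈ s) {t : ℝ} (ht₀ : 0 ≤ t)
    (ht₁ : t < 1) : ball (t • x) ((1 - t) * ρ) ⊆ s := by
  intro z hz
  have h1t : 0 < 1 - t := by linarith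
  set b := (1 - t)⁻¹ • (z - t • x)
  have hb : b ∈ ball (0 : E) ρ := by
    rw [mem_ball_zero_iff, norm_smul, norm_inv, Real.norm_of_nonneg h1t.le, inv_mul_lt_iff₀ h1t,
      ← dist_eq_norm]
    exact hz
  convert hs b hb hx h1t.le ht₀ (by ring) using 1
  simp only [b, smul_inv_smul₀ h1t.ne']
  abel

theorem LipschitzWith.abs_dilation_quotient_le {u : E → ℝ} {L : ℝ≥0} (hu : LipschitzWith L u)
    (x : E) (lam : ℝ) : |(u (lam • x) - u x) / (lam - 1)| ≤ L * ‖x‖ := by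
  rcases eq_or_ne lam 1 with rfl | h
  · simp; positivity
  rw [abs_div, div_le_iff₀ (abs_pos.2 (sub_ne_zero.2 h)), ← Real.dist_eq]
  calc dist (u (lam • x)) (u x) ≤ L * dist (lam • x) x := hu.dist_le_mul _ _
    _ = L * ‖x‖ * |lam - 1| := by
      rw [dist_eq_norm, show lam • x - x = (lam - 1) • x by rw [sub_smul, one_smul], norm_smul,
        Real.norm_eq_abs]; ring

theorem DifferentiableAt.tendsto_dilation_quotient {u : E → ℝ} {x : E}
    (hu : DifferentiableAt ℝ u x) :
    Tendsto (fun lam : ℝ => (u (lam • x) - u x) / (lam - 1)) (𝓝[≠] 1) (𝓝 (fderiv ℝ u x x)) := by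
  have hx : HasDerivAt (fun lam : ℝ => lam • x) x 1 := by
    simpa using (hasDerivAt_id' (1 : ℝ)).smul_const x
  have : HasDerivAt (fun lam : ℝ => u (lam • x)) (fderiv ℝ u x x) 1 :=
    hu.hasFDerivAt.comp_hasDerivAt_of_eq 1 hx (one_smul _ _).symm
  exact this.tendsto_slope.congr fun lam => by rw [slope_def_field, one_smul]

variable [FiniteDimensional ℝ E] [MeasurableSpace E] [BorelSpace E] (μ : Measure E)
  [μ.IsAddHaarMeasure]

theorem measure_infDist_frontier_lt_le {s : Set E} (hs : MeasurableSet s) (hμs : μ s ≠ ∞)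
    (hF : (frontier s).Nonempty) {ρ : ℝ} (hρ : 0 < ρ)
    (hstar : ∀ b ∈ ball (0 : E) ρ, StarConvex ℝ b s) {ε : ℝ} (hε : 0 < ε) (hερ : ε ≤ ρ) :
    μ {x ∈ s | infDist x (frontier s) < ε} ≤ ENNReal.ofReal (finrank ℝ E / ρ * ε) * μ s := by
  set t := 1 - ε / ρ
  have ht₀ : 0 ≤ t := sub_nonneg.2 (div_le_one_of_le₀ hερ hρ.le)
  have ht₁ : t < 1 := sub_lt_self _ (div_pos hε hρ)
  have hts : t • s ⊆ s :=
    smul_set_subset_iff.2 fun x hx => (hstar 0 (mem_ball_self hρ)).smul_mem hx ht₀ ht₁.le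
  have hcollar : {x ∈ s | infDist x (frontier s) < ε} ⊆ s \ t • s := by
    rintro _ ⟨hx, hlt⟩
    refine ⟨hx, ?_⟩
    rintro ⟨y, hy, rfl⟩
    have := le_infDist_frontier_of_ball_subset hF
      (ball_smul_subset_of_starConvex hstar hy ht₀ ht₁)
    have : (1 - t) * ρ = ε := by simp only [t, sub_sub_cancel]; field_simp
    linarith
  -- Bernoulli: `1 - tⁿ ≤ n (1 - t)`
  have hbern : 1 ≤ finrank ℝ E / ρ * ε + t ^ finrank ℝ E := by
    have := one_add_mul_le_pow (a := -(ε / ρ))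
      (by linarith [div_le_one_of_le₀ hερ hρ.le]) (finrank ℝ E)
    rw [← sub_eq_add_neg] at this
    linarith [show (finrank ℝ E : ℝ) / ρ * ε = finrank ℝ E * (ε / ρ) by ring]
  calc μ {x ∈ s | infDist x (frontier s) < ε} ≤ μ (s \ t • s) := measure_mono hcollar
    _ ≤ ENNReal.ofReal (finrank ℝ E / ρ * ε) * μ s := by
      rw [measure_sdiff_le_iff_le_add (hs.const_smul₀ t).nullMeasurableSet hts
        (ne_top_of_le_ne_top hμs (measure_mono hts)), Measure.addHaar_smul,
        abs_of_nonneg (pow_nonneg ht₀ _), ← add_mul,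
        ← ENNReal.ofReal_add (by positivity) (by positivity)]
      exact le_mul_of_one_le_left zero_le (ENNReal.one_le_ofReal.2 (by linarith))

theorem integrableOn_starWeight_infDist_frontier [Nontrivial E] {Ω : Set E} (hΩ : IsOpen Ω)
    (hΩb : IsBounded Ω) {ρ : ℝ} (hρ : 0 < ρ) (hstar : ∀ b ∈ ball (0 : E) ρ, StarConvex ℝ b Ω)
    {s : ℝ} (hs : s < 1) :
    IntegrableOn (fun x => starWeight s (infDist x (frontier Ω))) Ω μ := by
  rcases Ω.eq_empty_or_nonempty with rfl | hne
  · exact integrableOn_empty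
  have hF : (frontier Ω).Nonempty :=
    nonempty_frontier_iff.2 ⟨hne, fun h => NormedSpace.unbounded_univ ℝ E (h ▸ hΩb)⟩
  have hμΩ : μ Ω ≠ ∞ := hΩb.measure_lt_top.ne
  have hd := continuous_infDist_pt (frontier Ω)
  have hpos : ∀ x ∈ Ω, 0 < infDist x (frontier Ω) := fun x hx =>
    (isClosed_frontier.notMem_iff_infDist_pos hF).1 fun h => h.2 (hΩ.interior_eq.symm ▸ hx)
  have hcollar : ∀ ε ∈ Ioc 0 ρ, μ {x ∈ Ω | infDist x (frontier Ω) < ε} ≤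
      ENNReal.ofReal (finrank ℝ E / ρ * (μ Ω).toReal * ε) := fun ε hε => by
    rw [mul_right_comm, ENNReal.ofReal_mul (mul_nonneg (by positivity) hε.1.le),
      ENNReal.ofReal_toReal hμΩ]
    exact measure_infDist_frontier_lt_le μ hΩ.measurableSet hμΩ hF hρ hstar hε.1 hε.2
  exact integrableOn_starWeight_comp hΩ.measurableSet hμΩ hpos
    ((hd.continuousOn.integrableOn_compact hΩb.isCompact_closure).mono_set subset_closure)
    (fun a ha ha0 => integrableOn_rpow_of_measure_lt_le hΩ.measurableSet hμΩ hd.measurable hpos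
      hρ hcollar ha ha0) hs

theorem LipschitzWith.tendsto_setIntegral_dilation_quotient_mul {u : E → ℝ} {L : ℝ≥0}
    (hu : LipschitzWith L u) {s : Set E} (hs : IsBounded s) (hsm : MeasurableSet s) {g : E → ℝ}
    (hg : IntegrableOn g s μ) :
    Tendsto (fun lam : ℝ => ∫ x in s, (u (lam • x) - u x) / (lam - 1) * g x ∂μ) (𝓝[≠] 1)
      (𝓝 (∫ x in s, fderiv ℝ u x x * g x ∂μ)) := by
  obtain ⟨R, hR⟩ := hs.exists_norm_le
  have hquot : ∀ lam : ℝ, Continuous fun x => (u (lam • x) - u x) / (lam - 1) := fun lam =>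
    have := hu.continuous
    by fun_prop
  refine tendsto_integral_filter_of_dominated_convergence (fun x => L * R * ‖g x‖)
    (Eventually.of_forall fun lam => (hquot lam).aestronglyMeasurable.mul hg.aestronglyMeasurable)
    ?_ (hg.norm.const_mul _) ?_
  · refine Eventually.of_forall fun lam => (ae_restrict_mem hsm).mono fun x hx => ?_
    rw [norm_mul, Real.norm_eq_abs]
    gcongr
    exact (hu.abs_dilation_quotient_le x lam).trans (by gcongr; exact hR x hx)
  · exact (ae_restrict_of_ae hu.ae_differentiableAt).mono fun x hx =>
      hx.tendsto_dilation_quotient.mul_const (g x)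

end NormedSpace

namespace C2Domain

variable {n : ℕ} (D : C2Domain n)

theorem mem_carrier_iff {x : En n} : x ∈ D.carrier ↔ D.phi x < 0 := by
  rw [D.carrier_eq]; rfl

theorem isOpen : IsOpen D.carrier := by
  rw [D.carrier_eq]
  exact isOpen_lt D.phi_smooth.continuous continuous_const

theorem continuous_gradient_phi : Continuous (gradient D.phi) :=
  (InnerProductSpace.toDual ℝ (En n)).symm.continuous.comp
    (D.phi_smooth.continuous_fderiv (by norm_num))

theorem norm_nu {x : En n} (hx : x ∈ frontier D.carrier) : ‖D.nu x‖ = 1 := by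
  rw [C2Domain.nu, norm_smul, norm_inv, norm_norm,
    inv_mul_cancel₀ (norm_ne_zero_iff.2 (D.grad_ne x hx))]

theorem continuousOn_nu : ContinuousOn D.nu (frontier D.carrier) :=
  (D.continuous_gradient_phi.norm.continuousOn.inv₀ fun x hx =>
    norm_ne_zero_iff.2 (D.grad_ne x hx)).smul D.continuous_gradient_phi.continuousOn

theorem exists_pos_le_inner_nu (hD : D.StrictlyStarShapedAt 0) :
    ∃ ρ > 0, ∀ y ∈ frontier D.carrier, ρ ≤ ⟪y, D.nu y⟫ :=
  (D.bounded.isCompact_closure.of_isClosed_subset isClosed_frontier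
    frontier_subset_closure).exists_forall_le' (continuousOn_id.inner D.continuousOn_nu)
    fun y hy => by simpa using hD.2 y hy

/-- If the segment from `b` to `x ∈ Ω` left `Ω`, it would do so for the last time at a boundary
point `y`; there `φ` cannot increase towards `x`, i.e. `⟪x - b, ∇φ(y)⟫ ≤ 0`, whereas
`⟪y - b, ν(y)⟫ ≥ ρ - ‖b‖ > 0`. -/
theorem starConvex_of_norm_lt {ρ : ℝ} (hρ : ∀ y ∈ frontier D.carrier, ρ ≤ ⟪y, D.nu y⟫)
    {b : En n} (hb : b ∈ D.carrier) (hbρ : ‖b‖ < ρ) : StarConvex ℝ b D.carrier := by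
  refine starConvex_iff_segment_subset.2 fun x hx => ?_
  rw [segment_eq_image']
  rintro _ ⟨τ₁, hτ₁, rfl⟩
  by_contra hτ₁Ω
  set p : ℝ → En n := fun τ => b + τ • (x - b)
  have hp : Continuous p := by fun_prop
  obtain ⟨τ₀, ⟨hτ₁τ₀, hτ₀1⟩, hτ₀ : D.phi (p τ₀) = 0, hneg : ∀ τ ∈ Ioc τ₀ 1, D.phi (p τ) < 0⟩ :=
    exists_last_zero (D.phi_smooth.continuous.comp hp) hτ₁.2
      (not_lt.1 (D.mem_carrier_iff.not.1 hτ₁Ω)) (by simpa [p] using D.mem_carrier_iff.1 hx)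
  have hτ₀pos : 0 < τ₀ := (hτ₁.1.trans hτ₁τ₀).lt_of_ne fun h => by
    have := D.mem_carrier_iff.1 hb
    rw [← h] at hτ₀
    simp only [p, zero_smul, add_zero] at hτ₀
    linarith
  have hright : ∀ᶠ τ in 𝓝[>] τ₀, p τ ∈ D.carrier :=
    eventually_of_mem (Ioo_mem_nhdsGT hτ₀1) fun τ hτ =>
      D.mem_carrier_iff.2 (hneg τ (Ioo_subset_Ioc_self hτ))
  have hyF : p τ₀ ∈ frontier D.carrier := by
    rw [D.isOpen.frontier_eq]
    exact ⟨mem_closure_of_tendsto ((hp.tendsto τ₀).mono_left nhdsWithin_le_nhds) hright,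
      fun h => (D.mem_carrier_iff.1 h).ne hτ₀⟩
  have hderiv : HasDerivAt (fun τ => D.phi (p τ)) (fderiv ℝ D.phi (p τ₀) (x - b)) τ₀ :=
    (D.phi_smooth.differentiable (by norm_num) _).hasFDerivAt.comp_hasDerivAt τ₀
      (by simpa [p] using ((hasDerivAt_id' τ₀).smul_const (x - b)).const_add b)
  have hle : fderiv ℝ D.phi (p τ₀) (x - b) ≤ 0 := hderiv.nonpos_of_eventually_le_right
    (hright.mono fun τ hτ => hτ₀ ▸ (D.mem_carrier_iff.1 hτ).le)
  have hinner : 0 < ⟪p τ₀ - b, D.nu (p τ₀)⟫ := by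
    have := real_inner_le_norm b (D.nu (p τ₀))
    rw [D.norm_nu hyF, mul_one] at this
    linarith [inner_sub_left (𝕜 := ℝ) (p τ₀) b (D.nu (p τ₀)), hρ _ hyF]
  rw [show p τ₀ - b = τ₀ • (x - b) from add_sub_cancel_left _ _, C2Domain.nu, inner_smul_left,
    inner_smul_right, real_inner_comm, inner_gradient_left] at hinner
  exact hinner.not_ge (mul_nonpos_of_nonneg_of_nonpos hτ₀pos.le
    (mul_nonpos_of_nonneg_of_nonpos (by positivity) hle))

theorem exists_ball_starConvex (hD : D.StrictlyStarShapedAt 0) :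
    ∃ ρ > 0, ∀ b ∈ ball (0 : En n) ρ, StarConvex ℝ b D.carrier := by
  obtain ⟨ρ₀, hρ₀, hle⟩ := D.exists_pos_le_inner_nu hD
  obtain ⟨r, hr, hball⟩ := Metric.isOpen_iff.1 D.isOpen 0 hD.1
  refine ⟨min ρ₀ r, lt_min hρ₀ hr, fun b hb => D.starConvex_of_norm_lt hle
    (hball (ball_subset_ball (min_le_right _ _) hb)) ?_⟩
  exact (mem_ball_zero_iff.1 hb).trans_le (min_le_left _ _)

end C2Domain

theorem stronglyMeasurable_fracLap {n : ℕ} (s : ℝ) {u : En n → ℝ} (hu : Measurable u) :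
    StronglyMeasurable (fracLap n s u) := by
  have : StronglyMeasurable (Function.uncurry fun x y : En n =>
      (2 * u x - u (x + y) - u (x - y)) / ‖y‖ ^ ((n : ℝ) + 2 * s)) := by
    apply Measurable.stronglyMeasurable
    fun_prop
  exact (this.integral_prod_right (ν := volume)).const_mul _

theorem integrableOn_fracLap_of_starCond {n : ℕ} {s : ℝ} {Ω : Set (En n)} {u : En n → ℝ}
    (hu : Measurable u) (hΩ : MeasurableSet Ω) (hstar : StarCond n s Ω u)
    (hw : IntegrableOn (fun x => starWeight s (infDist x (frontier Ω))) Ω) :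
    IntegrableOn (fracLap n s u) Ω := by
  obtain ⟨C, -, _, -, hbd⟩ := hstar
  refine Integrable.mono' (hw.const_mul C)
    (stronglyMeasurable_fracLap s hu).aestronglyMeasurable ?_
  filter_upwards [ae_restrict_mem hΩ] with x hx
  exact (hbd x hx).2.2

theorem pohozaev_step_A_general (n : ℕ) (hn : 1 ≤ n) (s : ℝ) (hs : s ∈ Set.Ioo (0:ℝ) 1)
    (D : C2Domain n) (hD : D.StrictlyStarShapedAt 0)
    (u : En n → ℝ)
    (hlip : ∃ L : ℝ≥0, LipschitzWith L u)
    (hstar : StarCond n s D.carrier u) :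
    IntegrableOn (fun x => fracLap n s u x) D.carrier ∧
    Filter.Tendsto
      (fun lam : ℝ => ∫ x in D.carrier,
        ((u (lam • x) - u x) / (lam - 1)) * fracLap n s u x)
      (nhdsWithin 1 (Set.Ioi 1))
      (nhds (∫ x in D.carrier, ⟪x, gradient u x⟫ * fracLap n s u x)) := by
  obtain ⟨L, hL⟩ := hlip
  have : Nonempty (Fin n) := ⟨⟨0, hn⟩⟩
  obtain ⟨ρ, hρ, hball⟩ := D.exists_ball_starConvex hD
  have hint : IntegrableOn (fracLap n s u) D.carrier :=
    integrableOn_fracLap_of_starCond hL.continuous.measurable D.isOpen.measurableSet hstar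
      (integrableOn_starWeight_infDist_frontier volume D.isOpen D.bounded hρ hball hs.2)
  refine ⟨hint, ?_⟩
  simp only [inner_gradient_right, conj_trivial]
  exact (hL.tendsto_setIntegral_dilation_quotient_mul volume D.bounded D.isOpen.measurableSet
    hint).mono_left (nhdsGT_le_nhdsNE 1)

/-- Step (A) in the proof of Theorem 2.4: under condition (★),
`(-Δ)ˢu` is integrable on `Ω` and
`lim_{λ→1⁺} ∫_Ω ((u(λx)-u(x))/(λ-1)) (-Δ)ˢu(x) dx = ∫_Ω (x·∇u)(-Δ)ˢu dx`. -/
theorem pohozaev_step_A (n : ℕ) (hn : 1 ≤ n) (s : ℝ) (hs : s ∈ Set.Ioo (0:ℝ) 1)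
    (D : C2Domain n) (hD : D.StrictlyStarShapedAt 0)
    (u : En n → ℝ)
    (hu2 : ContDiffOn ℝ 2 u D.carrier)
    (hu1 : ContDiffOn ℝ 1 u (closure D.carrier))
    (hlip : ∃ L : ℝ≥0, LipschitzWith L u)
    (hzero : ∀ x ∉ D.carrier, u x = 0)
    (hstar : StarCond n s D.carrier u) :
    IntegrableOn (fun x => fracLap n s u x) D.carrier ∧
    Filter.Tendsto
      (fun lam : ℝ => ∫ x in D.carrier,
        ((u (lam • x) - u x) / (lam - 1)) * fracLap n s u x)
      (nhdsWithin 1 (Set.Ioi 1))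
      (nhds (∫ x in D.carrier, ⟪x, gradient u x⟫ * fracLap n s u x)) :=
  pohozaev_step_A_general n hn s hs D hD u hlip hstar
end
end

section
/- Let n ≥ 1, s ∈ (0,1), and let u : ℝⁿ → ℝ be bounded and Lipschitz with u = 0 outside some bounded set. Then lim_{ε→0⁺} c_{n,s} ∫_{ℝⁿ} u(x) (∫_{|y−x|≥ε} (u(x) − u(y))/|x−y|^{n+2s} dy) dx = (c_{n,s}/2) ∬_{ℝⁿ×ℝⁿ} (u(x) − u(y))²/|x−y|^{n+2s} dx dy = [u]_s², and this quantity is finite. -/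
open MeasureTheory Real Set Metric Bornology Filter
open scoped RealInnerProductSpace ENNReal NNReal Pointwise

noncomputable section

/-!
Write `k z = ‖z‖ ^ (-(n + 2s))`. Since `u` is Lipschitz with compact support,
`∫ (u (z + y) - u y)² dy ≲ min (‖z‖², 1)`, and `min (‖z‖², 1) k z` is integrable because `0 < s < 1`;
after the substitution `z = x - y` this makes `(u x - u y)² k (x - y)` integrable on `ℝⁿ × ℝⁿ`.
For `ε > 0` the truncated integrand `u x (u x - u y) k (x - y)` is integrable as well, and adding
its image under `(x, y) ↦ (y, x)` gives `(u x - u y)² k (x - y)`: the truncated principal value is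
half the double integral over `{ε ≤ |x - y|}`, which tends to the full one by dominated
convergence.
-/

open Module

theorem integrable_min_sq_one_mul_norm_rpow_neg {E : Type*} [NormedAddCommGroup E]
    [NormedSpace ℝ E] [FiniteDimensional ℝ E] [Nontrivial E] [MeasurableSpace E] [BorelSpace E]
    (μ : Measure E) [μ.IsAddHaarMeasure] {q : ℝ} (hq : (finrank ℝ E : ℝ) < q)
    (hq' : q < finrank ℝ E + 2) :
    Integrable (fun z : E => min (‖z‖ ^ 2) 1 * ‖z‖ ^ (-q)) μ := by
  have hd : ((finrank ℝ E - 1 : ℕ) : ℝ) = finrank ℝ E - 1 := by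
    rw [Nat.cast_sub finrank_pos, Nat.cast_one]
  rw [integrable_fun_norm_addHaar μ (f := fun r => min (r ^ 2) 1 * r ^ (-q)),
    ← Ioc_union_Ioi_eq_Ioi zero_le_one]
  refine IntegrableOn.union ?_ ?_
  · have hint : IntegrableOn (fun y : ℝ => y ^ ((finrank ℝ E : ℝ) + 1 - q)) (Ioc 0 1) := by
      rw [integrableOn_Ioc_iff_integrableOn_Ioo, intervalIntegral.integrableOn_Ioo_rpow_iff one_pos]
      linarith
    refine hint.congr_fun (fun y ⟨hy0, hy1⟩ => ?_) measurableSet_Ioc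
    rw [smul_eq_mul, min_eq_left (pow_le_one₀ hy0.le hy1), ← Real.rpow_natCast, hd,
      ← Real.rpow_natCast, ← Real.rpow_add hy0, ← Real.rpow_add hy0]
    push_cast; ring_nf
  · have hint : IntegrableOn (fun y : ℝ => y ^ ((finrank ℝ E : ℝ) - 1 - q)) (Ioi 1) :=
      integrableOn_Ioi_rpow_of_lt (by linarith) one_pos
    refine hint.congr_fun (fun y (hy : 1 < y) => ?_) measurableSet_Ioi
    have hy0 : 0 < y := one_pos.trans hy
    rw [smul_eq_mul, min_eq_right (one_le_pow₀ hy.le), one_mul, ← Real.rpow_natCast, hd,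
      ← Real.rpow_add hy0]
    ring_nf

theorem LipschitzWith.sq_sub_add_le {E : Type*} [SeminormedAddCommGroup E] {u : E → ℝ}
    {L : ℝ≥0} (hL : LipschitzWith L u) {B : ℝ} (hB : ∀ x, ‖u x‖ ≤ B) (z y : E) :
    (u (z + y) - u y) ^ 2 ≤ max ((L : ℝ) ^ 2) ((2 * B) ^ 2) * min (‖z‖ ^ 2) 1 := by
  have hlip : |u (z + y) - u y| ≤ L * ‖z‖ := by
    simpa [Real.dist_eq, dist_eq_norm] using hL.dist_le_mul (z + y) y
  have hbd : |u (z + y) - u y| ≤ 2 * B := by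
    rw [← Real.norm_eq_abs]
    linarith [_root_.norm_sub_le (u (z + y)) (u y), hB (z + y), hB y]
  have h1 := sq_le_sq' (abs_le.1 hlip).1 (abs_le.1 hlip).2
  have h2 := sq_le_sq' (abs_le.1 hbd).1 (abs_le.1 hbd).2
  rcases min_cases (‖z‖ ^ 2) 1 with ⟨hm, -⟩ | ⟨hm, -⟩ <;> rw [hm]
  · nlinarith [le_max_left ((L : ℝ) ^ 2) ((2 * B) ^ 2), sq_nonneg ‖z‖]
  · linarith [le_max_right ((L : ℝ) ^ 2) ((2 * B) ^ 2)]

theorem LipschitzWith.exists_integral_sq_sub_add_le {E : Type*} [NormedAddCommGroup E]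
    [MeasurableSpace E] [BorelSpace E] (μ : Measure E) [μ.IsAddLeftInvariant]
    [IsFiniteMeasureOnCompacts μ] {u : E → ℝ} {L : ℝ≥0} (hL : LipschitzWith L u)
    (hu : HasCompactSupport u) :
    ∃ C, ∀ z, Integrable (fun y => (u (z + y) - u y) ^ 2) μ ∧
      ∫ y, (u (z + y) - u y) ^ 2 ∂μ ≤ C * min (‖z‖ ^ 2) 1 := by
  obtain ⟨B, hB⟩ := hL.continuous.bounded_above_of_compact_support hu
  set S := tsupport u
  set A := max ((L : ℝ) ^ 2) ((2 * B) ^ 2)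
  refine ⟨A * (2 * μ.real S), fun z => ?_⟩
  set T := S ∪ (fun y => z + y) ⁻¹' S
  have hT : MeasurableSet T :=
    (isClosed_tsupport u).measurableSet.union
      ((isClosed_tsupport u).preimage (continuous_const_add z)).measurableSet
  have hμT : μ.real T ≤ 2 * μ.real S := by
    calc μ.real T ≤ μ.real S + μ.real ((fun y => z + y) ⁻¹' S) := measureReal_union_le _ _
      _ = 2 * μ.real S := by rw [measureReal_def, measureReal_def, measure_preimage_add]; ring
  have hpt : ∀ y, (u (z + y) - u y) ^ 2 ≤ T.indicator (fun _ => A * min (‖z‖ ^ 2) 1) y := by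
    intro y
    by_cases hy : y ∈ T
    · rw [indicator_of_mem hy]
      exact hL.sq_sub_add_le hB z y
    · simp only [T, mem_union, mem_preimage, not_or] at hy
      rw [indicator_of_notMem (by simp [T, hy]), image_eq_zero_of_notMem_tsupport hy.1,
        image_eq_zero_of_notMem_tsupport hy.2, sub_zero, zero_pow two_ne_zero]
  have hS : μ S < ⊤ := hu.isCompact.measure_lt_top
  have hint : Integrable (T.indicator fun _ => A * min (‖z‖ ^ 2) 1) μ :=
    (integrable_indicator_iff hT).2 <| integrableOn_const <|
      (measure_union_lt_top hS (by rwa [measure_preimage_add])).ne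
  have hmeas : AEStronglyMeasurable (fun y => (u (z + y) - u y) ^ 2) μ := by
    have hc := hL.continuous; fun_prop
  have hsq : Integrable (fun y => (u (z + y) - u y) ^ 2) μ :=
    hint.mono' hmeas (.of_forall fun y => by rw [Real.norm_of_nonneg (sq_nonneg _)]; exact hpt y)
  refine ⟨hsq, ?_⟩
  calc ∫ y, (u (z + y) - u y) ^ 2 ∂μ ≤ ∫ y, T.indicator (fun _ => A * min (‖z‖ ^ 2) 1) y ∂μ :=
        integral_mono hsq hint hpt
    _ = μ.real T * (A * min (‖z‖ ^ 2) 1) := integral_indicator_const _ hT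
    _ ≤ 2 * μ.real S * (A * min (‖z‖ ^ 2) 1) := by gcongr
    _ = _ := by ring

theorem integral_mul_sub_mul_eq_half_integral_sq_sub_mul {α : Type*} [MeasurableSpace α]
    {μ : Measure α} [SFinite μ] {f : α → ℝ} {K : α × α → ℝ} (hK : ∀ p, K p.swap = K p)
    (hF : Integrable (fun p : α × α => f p.1 * (f p.1 - f p.2) * K p) (μ.prod μ)) :
    ∫ p, f p.1 * (f p.1 - f p.2) * K p ∂μ.prod μ =
      2⁻¹ * ∫ p, (f p.1 - f p.2) ^ 2 * K p ∂μ.prod μ := by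
  have hswap : ∫ p, f p.2 * (f p.2 - f p.1) * K p ∂μ.prod μ =
      ∫ p, f p.1 * (f p.1 - f p.2) * K p ∂μ.prod μ := by
    simpa [hK] using integral_prod_swap (fun p : α × α => f p.1 * (f p.1 - f p.2) * K p)
  have hsum : ∫ p, (f p.1 - f p.2) ^ 2 * K p ∂μ.prod μ =
      ∫ p, f p.1 * (f p.1 - f p.2) * K p ∂μ.prod μ +
        ∫ p, f p.2 * (f p.2 - f p.1) * K p ∂μ.prod μ := by
    rw [← integral_add hF (by simpa [Function.comp_def, hK] using hF.swap)]
    congr 1 with p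
    ring
  rw [hsum, hswap]
  ring

theorem tendsto_setIntegral_setOf_le_nhdsGT_zero {β : Type*} [MeasurableSpace β] {μ : Measure β}
    {φ : β → ℝ} (hφ : Measurable φ) {f : β → ℝ} (hf : Integrable f μ)
    (hf0 : ∀ p, φ p ≤ 0 → f p = 0) :
    Filter.Tendsto (fun ε => ∫ p in {p | ε ≤ φ p}, f p ∂μ) (nhdsWithin 0 (Ioi 0))
      (nhds (∫ p, f p ∂μ)) := by
  have hmeas : ∀ ε, MeasurableSet {p | ε ≤ φ p} := fun ε => measurableSet_le measurable_const hφ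
  simp_rw [← integral_indicator (hmeas _)]
  refine MeasureTheory.tendsto_integral_filter_of_dominated_convergence (fun p => ‖f p‖)
    (.of_forall fun ε => (hf.aestronglyMeasurable.indicator (hmeas ε)))
    (.of_forall fun ε => .of_forall fun p => norm_indicator_le_norm_self _ _) hf.norm
    (.of_forall fun p => tendsto_const_nhds.congr' ?_)
  by_cases hp : 0 < φ p
  · filter_upwards [Ioc_mem_nhdsGT hp] with ε hε
    exact (indicator_of_mem (s := {p | ε ≤ φ p}) hε.2 f).symm
  · exact .of_forall fun ε => (indicator_apply_eq_self.2 fun _ => hf0 p (not_lt.1 hp)).symm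

structure IsSymmetricLevyKernel {E : Type*} [NormedAddCommGroup E] [MeasurableSpace E]
    (μ : Measure E) (k : E → ℝ) : Prop where
  measurable : Measurable k
  nonneg : ∀ z, 0 ≤ k z
  neg_eq : ∀ z, k (-z) = k z
  integrable_min_sq_one_mul : Integrable (fun z => min (‖z‖ ^ 2) 1 * k z) μ

theorem isSymmetricLevyKernel_norm_rpow_neg {E : Type*} [NormedAddCommGroup E]
    [NormedSpace ℝ E] [FiniteDimensional ℝ E] [Nontrivial E] [MeasurableSpace E] [BorelSpace E]
    (μ : Measure E) [μ.IsAddHaarMeasure] {q : ℝ} (hq : (finrank ℝ E : ℝ) < q)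
    (hq' : q < finrank ℝ E + 2) :
    IsSymmetricLevyKernel μ fun z : E => ‖z‖ ^ (-q) where
  measurable := by fun_prop
  nonneg z := Real.rpow_nonneg (norm_nonneg z) _
  neg_eq z := by rw [norm_neg]
  integrable_min_sq_one_mul := integrable_min_sq_one_mul_norm_rpow_neg μ hq hq'

namespace IsSymmetricLevyKernel

theorem integrable_indicator_le_norm {E : Type*} [NormedAddCommGroup E] [MeasurableSpace E]
    [OpensMeasurableSpace E] {μ : Measure E} {k : E → ℝ} (hk : IsSymmetricLevyKernel μ k)
    {ε : ℝ} (hε : 0 < ε) : Integrable ({z | ε ≤ ‖z‖}.indicator k) μ := by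
  have hc : 0 < min (ε ^ 2) 1 := by positivity
  have hmeas : MeasurableSet {z : E | ε ≤ ‖z‖} := measurableSet_le measurable_const measurable_norm
  refine (hk.integrable_min_sq_one_mul.const_mul (min (ε ^ 2) 1)⁻¹).mono'
    (hk.measurable.indicator hmeas).aestronglyMeasurable (.of_forall fun z => ?_)
  by_cases hz : z ∈ {z : E | ε ≤ ‖z‖}
  · have hm : min (ε ^ 2) 1 ≤ min (‖z‖ ^ 2) 1 := by gcongr; exact hz
    rw [indicator_of_mem hz, Real.norm_of_nonneg (hk.nonneg z)]
    calc k z = (min (ε ^ 2) 1)⁻¹ * (min (ε ^ 2) 1 * k z) := by field_simp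
      _ ≤ _ := by gcongr; exact hk.nonneg z
  · rw [indicator_of_notMem hz, norm_zero]
    exact mul_nonneg (inv_nonneg.2 hc.le) (mul_nonneg (by positivity) (hk.nonneg z))

section LipschitzCompactSupport

variable {E : Type*} [NormedAddCommGroup E] [MeasurableSpace E] [BorelSpace E]
  [SecondCountableTopology E] [LocallyCompactSpace E] {μ : Measure E} [μ.IsAddHaarMeasure]
  {k : E → ℝ} {u : E → ℝ} {L : ℝ≥0}

theorem integrable_sq_sub_mul (hk : IsSymmetricLevyKernel μ k) (hL : LipschitzWith L u)
    (hu : HasCompactSupport u) :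
    Integrable (fun p : E × E => (u p.1 - u p.2) ^ 2 * k (p.1 - p.2)) (μ.prod μ) := by
  obtain ⟨C, hC⟩ := hL.exists_integral_sq_sub_add_le μ hu
  have hum := hL.continuous.measurable
  have hkm := hk.measurable
  have hΦ : Measurable fun p : E × E => (u (p.1 + p.2) - u p.2) ^ 2 * k p.1 := by fun_prop
  have hcomp : (fun p : E × E => (u p.1 - u p.2) ^ 2 * k (p.1 - p.2)) =
      (fun p : E × E => (u (p.1 + p.2) - u p.2) ^ 2 * k p.1) ∘ fun p => (p.1 - p.2, p.2) := by
    funext p; simp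
  rw [hcomp, (measurePreserving_sub_prod μ μ).integrable_comp hΦ.aestronglyMeasurable,
    integrable_prod_iff hΦ.aestronglyMeasurable]
  refine ⟨.of_forall fun z => (hC z).1.mul_const (k z),
    (hk.integrable_min_sq_one_mul.const_mul C).mono'
      hΦ.norm.stronglyMeasurable.integral_prod_right'.aestronglyMeasurable
      (.of_forall fun z => ?_)⟩
  have hnorm : ∀ y, ‖(u (z + y) - u y) ^ 2 * k z‖ = (u (z + y) - u y) ^ 2 * k z := fun y =>
    Real.norm_of_nonneg (mul_nonneg (sq_nonneg _) (hk.nonneg z))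
  simp only [hnorm]
  rw [integral_mul_const, Real.norm_of_nonneg
    (mul_nonneg (integral_nonneg fun y => sq_nonneg _) (hk.nonneg z)), ← mul_assoc]
  exact mul_le_mul_of_nonneg_right (hC z).2 (hk.nonneg z)

theorem integrable_mul_sub_mul_indicator (hk : IsSymmetricLevyKernel μ k)
    (hL : LipschitzWith L u) (hu : HasCompactSupport u) {ε : ℝ} (hε : 0 < ε) :
    Integrable (fun p : E × E => u p.1 * (u p.1 - u p.2) * {z | ε ≤ ‖z‖}.indicator k (p.1 - p.2))
      (μ.prod μ) := by
  obtain ⟨B, hB⟩ := hL.continuous.bounded_above_of_compact_support hu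
  set kε := {z : E | ε ≤ ‖z‖}.indicator k
  have hkε_neg : ∀ z, kε (-z) = kε z := fun z => by
    simp only [kε, indicator, mem_ofPred_eq, norm_neg, hk.neg_eq]
  have hkε_nonneg : ∀ z, 0 ≤ kε z := fun z => indicator_nonneg (fun z _ => hk.nonneg z) z
  have hdom : Integrable (fun p : E × E => ‖u p.1‖ * kε (p.1 - p.2)) (μ.prod μ) := by
    have hconv := (hL.continuous.integrable_of_hasCompactSupport hu (μ := μ)).norm
      |>.convolution_integrand (ContinuousLinearMap.mul ℝ ℝ) (hk.integrable_indicator_le_norm hε)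
    refine hconv.swap.congr (.of_forall fun p => ?_)
    simp only [Function.comp_apply, Prod.fst_swap, Prod.snd_swap, ContinuousLinearMap.mul_apply']
    rw [← neg_sub p.1 p.2]
    exact congrArg (‖u p.1‖ * ·) (hkε_neg _)
  refine (hdom.const_mul (2 * B)).mono' ?_ (.of_forall fun p => ?_)
  · have hum := hL.continuous.measurable
    have hkεm : Measurable kε :=
      hk.measurable.indicator (measurableSet_le measurable_const measurable_norm)
    fun_prop
  · have hdiff : ‖u p.1 - u p.2‖ ≤ 2 * B := by
      linarith [norm_sub_le (u p.1) (u p.2), hB p.1, hB p.2]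
    rw [norm_mul, norm_mul, Real.norm_of_nonneg (hkε_nonneg _)]
    calc ‖u p.1‖ * ‖u p.1 - u p.2‖ * kε (p.1 - p.2) ≤ ‖u p.1‖ * (2 * B) * kε (p.1 - p.2) := by
          gcongr; exact hkε_nonneg _
      _ = _ := by ring

theorem integral_mul_setIntegral_eq_half_setIntegral (hk : IsSymmetricLevyKernel μ k)
    (hL : LipschitzWith L u) (hu : HasCompactSupport u) {ε : ℝ} (hε : 0 < ε) :
    ∫ x, u x * ∫ y in {y | ε ≤ dist y x}, (u x - u y) * k (x - y) ∂μ ∂μ =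
      2⁻¹ * ∫ p in {p : E × E | ε ≤ dist p.1 p.2}, (u p.1 - u p.2) ^ 2 * k (p.1 - p.2)
        ∂μ.prod μ := by
  set kε := {z : E | ε ≤ ‖z‖}.indicator k
  have hinner : ∀ x, u x * ∫ y in {y | ε ≤ dist y x}, (u x - u y) * k (x - y) ∂μ =
      ∫ y, u x * (u x - u y) * kε (x - y) ∂μ := fun x => by
    rw [← integral_const_mul, ← integral_indicator
      (measurableSet_le measurable_const (measurable_id'.dist measurable_const))]
    congr 1 with y
    simp only [kε, indicator_apply, mem_ofPred_eq, dist_eq_norm']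
    split_ifs <;> ring
  have hsymm : ∀ p : E × E, kε (p.swap.1 - p.swap.2) = kε (p.1 - p.2) := fun p => by
    simp only [kε, indicator_apply, mem_ofPred_eq, Prod.fst_swap, Prod.snd_swap, norm_sub_rev]
    rw [← neg_sub p.1 p.2, hk.neg_eq]
  have hF := hk.integrable_mul_sub_mul_indicator hL hu hε
  simp_rw [hinner]
  rw [integral_integral (f := fun x y => u x * (u x - u y) * kε (x - y)) hF,
    integral_mul_sub_mul_eq_half_integral_sq_sub_mul (K := fun p => kε (p.1 - p.2)) hsymm hF,
    ← integral_indicator (measurableSet_le measurable_const measurable_dist)]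
  congr 2 with p
  simp only [kε, indicator_apply, mem_ofPred_eq, dist_eq_norm]
  split_ifs <;> ring

end LipschitzCompactSupport

end IsSymmetricLevyKernel

theorem seminorm_principal_value_general (n : ℕ) (hn : 1 ≤ n) (s : ℝ)
    (hs : s ∈ Set.Ioo (0:ℝ) 1)
    (u : En n → ℝ) (L : ℝ≥0)
    (hL : LipschitzWith L u)
    (hsupp : ∃ K : Set (En n), IsBounded K ∧ ∀ x ∉ K, u x = 0) :
    Integrable (fun p : En n × En n =>
      (u p.1 - u p.2) ^ 2 / ‖p.1 - p.2‖ ^ ((n : ℝ) + 2 * s)) ∧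
    Filter.Tendsto
      (fun ε : ℝ => cK n s * ∫ x : En n, u x *
        ∫ y in {y : En n | ε ≤ dist y x}, (u x - u y) / ‖x - y‖ ^ ((n : ℝ) + 2 * s))
      (nhdsWithin 0 (Set.Ioi 0)) (nhds (seminormSsq n s u)) := by
  obtain ⟨K, hK, hKu⟩ := hsupp
  have hu : HasCompactSupport u :=
    .intro hK.isCompact_closure fun x hx => hKu x fun h => hx (subset_closure h)
  have : NeZero n := ⟨by omega⟩
  have hk : IsSymmetricLevyKernel volume fun z : En n => ‖z‖ ^ (-((n : ℝ) + 2 * s)) :=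
    isSymmetricLevyKernel_norm_rpow_neg volume (by simp; linarith [hs.1])
      (by simp; linarith [hs.2])
  have hdiv : ∀ (a : ℝ) (z : En n), a / ‖z‖ ^ ((n : ℝ) + 2 * s) =
      a * ‖z‖ ^ (-((n : ℝ) + 2 * s)) := fun a z => by
    rw [Real.rpow_neg (norm_nonneg z), div_eq_mul_inv]
  simp only [seminormSsq, hdiv]
  have hint := hk.integrable_sq_sub_mul hL hu
  refine ⟨hint, ?_⟩
  have hlim := (tendsto_setIntegral_setOf_le_nhdsGT_zero measurable_dist hint
    fun p hp => by simp [dist_le_zero.1 hp]).const_mul (cK n s / 2)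
  refine hlim.congr' ?_
  filter_upwards [self_mem_nhdsWithin] with ε hε
  rw [hk.integral_mul_setIntegral_eq_half_setIntegral hL hu hε]
  ring

/-- principal-value representation of `[u]_s²` for bounded Lipschitz
compactly supported `u`:
`lim_{ε→0⁺} c_{n,s} ∫ u(x) ∫_{|y-x|≥ε} (u(x)-u(y))/|x-y|^{n+2s} dy dx = [u]_s² < ∞`. -/
theorem seminorm_principal_value (n : ℕ) (hn : 1 ≤ n) (s : ℝ)
    (hs : s ∈ Set.Ioo (0:ℝ) 1)
    (u : En n → ℝ) (M : ℝ) (L : ℝ≥0)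
    (hM : ∀ x, |u x| ≤ M) (hL : LipschitzWith L u)
    (hsupp : ∃ K : Set (En n), IsBounded K ∧ ∀ x ∉ K, u x = 0) :
    Integrable (fun p : En n × En n =>
      (u p.1 - u p.2) ^ 2 / ‖p.1 - p.2‖ ^ ((n : ℝ) + 2 * s)) ∧
    Filter.Tendsto
      (fun ε : ℝ => cK n s * ∫ x : En n, u x *
        ∫ y in {y : En n | ε ≤ dist y x}, (u x - u y) / ‖x - y‖ ^ ((n : ℝ) + 2 * s))
      (nhdsWithin 0 (Set.Ioi 0)) (nhds (seminormSsq n s u)) :=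
  seminorm_principal_value_general n hn s hs u L hL hsupp
end
end

section
/- Let n ≥ 1, s ∈ (0,1), let Ω ⊂ ℝⁿ be a bounded open set containing the origin such that dist(y, (2Ω)ᶜ is bounded away from Ω, i.e. there exists κ > 0 with |x − y| ≥ κ for all y ∈ Ω and all x ∉ 2Ω (as holds when Ω is a bounded C² domain strictly star-shaped with respect to the origin, where 2Ω = {2z : z ∈ Ω}). Let u : ℝⁿ → ℝ be bounded and Lipschitz with u = 0 in Ωᶜ, and let 𝔤 = (−Δ)^{s/2}u. Then for every x ∉ 2Ω one has 𝔤(x) = −c_{n,s/2} ∫_Ω u(y)/|x−y|^{n+s} dy, 𝔤 is twice continuously differentiable at x, and there exists a constant C (independent of x) such that |𝔤(x)| ≤ C|x|^{−n−s}, |∇𝔤(x)| ≤ C|x|^{−n−s−1}, and |D²𝔤(x)| ≤ C|x|^{−n−s−2}. -/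
open MeasureTheory Real Set Metric Bornology Filter
open scoped RealInnerProductSpace ENNReal NNReal Pointwise

noncomputable section

/-!
Outside `2Ω` the point `x` stays at distance `≥ κ` from `Ω ⊇ supp u`, so the integral defining `𝔤`
is no longer singular there: near `x`, `𝔤 = -c_{n,s/2} P` with `P(x) = ∫_Ω u(y) K(x - y) dy` the
potential of `K(z) = |z|^{-n-s}`. Off the origin `K` is smooth and positively homogeneous of degree
`p = -n - s ≤ 0`, hence `DʲK` is homogeneous of degree `p - j` and `|DʲK(z)| ≤ Cⱼ |z|^{p-j}`, with
`Cⱼ` the maximum of `|DʲK|` on the unit sphere. This justifies differentiating twice under the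
integral sign, and since `Ω` is bounded, `|x - y| ≥ c₀ |x|` for `x ∉ 2Ω` and `y ∈ Ω`, which turns
the kernel bounds into the decay `|DʲP(x)| ≤ C |x|^{p-j}`.
-/

open Topology

section Homogeneous

variable {E F : Type*} [NormedAddCommGroup E] [NormedSpace ℝ E]
  [NormedAddCommGroup F] [NormedSpace ℝ F]

def IsPosHomogeneous (p : ℝ) (f : E → F) : Prop :=
  ∀ t : ℝ, 0 < t → ∀ z, f (t • z) = t ^ p • f z

def BoundedAwayFromOrigin (f : E → F) : Prop :=
  ∀ r > 0, ∃ B, ∀ z, r ≤ ‖z‖ → ‖f z‖ ≤ B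

theorem isPosHomogeneous_norm_rpow (p : ℝ) : IsPosHomogeneous p fun z : E => ‖z‖ ^ p := by
  intro t ht z
  show ‖t • z‖ ^ p = t ^ p • ‖z‖ ^ p
  rw [norm_smul, Real.norm_of_nonneg ht.le, smul_eq_mul, Real.mul_rpow ht.le (norm_nonneg z)]

theorem IsPosHomogeneous.fderiv {p : ℝ} {f : E → F} (hf : IsPosHomogeneous p f) :
    IsPosHomogeneous (p - 1) (_root_.fderiv ℝ f) := by
  intro t ht z
  have key : t • _root_.fderiv ℝ f (t • z) = t ^ p • _root_.fderiv ℝ f z := by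
    rw [← fderiv_comp_smul, show (fun w => f (t • w)) = t ^ p • f from funext (hf t ht),
      fderiv_const_smul_field]
    rfl
  rw [Real.rpow_sub_one ht.ne', div_eq_mul_inv, mul_comm, mul_smul, ← key,
    inv_smul_smul₀ ht.ne']

variable [ProperSpace E] {p : ℝ} {f : E → F}

theorem IsPosHomogeneous.exists_norm_le (hf : IsPosHomogeneous p f)
    (hc : ∀ z ≠ 0, ContinuousAt f z) : ∃ C, 0 ≤ C ∧ ∀ z ≠ 0, ‖f z‖ ≤ C * ‖z‖ ^ p := by
  obtain ⟨C, hC⟩ := (isCompact_sphere (0 : E) 1).exists_bound_of_continuousOn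
    fun z hz => (hc z (ne_zero_of_mem_unit_sphere ⟨z, hz⟩)).continuousWithinAt
  refine ⟨max C 0, le_max_right _ _, fun z hz => ?_⟩
  have hz' : 0 < ‖z‖ := norm_pos_iff.2 hz
  have hunit : ‖z‖⁻¹ • z ∈ sphere (0 : E) 1 := by
    simp [norm_smul, hz'.ne']
  calc ‖f z‖ = ‖z‖ ^ p * ‖f (‖z‖⁻¹ • z)‖ := by
        conv_lhs => rw [← smul_inv_smul₀ hz'.ne' z, hf _ hz', norm_smul,
          Real.norm_of_nonneg (by positivity)]
    _ ≤ ‖z‖ ^ p * max C 0 := by gcongr; exact (hC _ hunit).trans (le_max_left _ _)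
    _ = max C 0 * ‖z‖ ^ p := mul_comm _ _

theorem IsPosHomogeneous.boundedAwayFromOrigin (hf : IsPosHomogeneous p f) (hp : p ≤ 0)
    (hc : ∀ z ≠ 0, ContinuousAt f z) : BoundedAwayFromOrigin f := by
  obtain ⟨C, hC0, hC⟩ := hf.exists_norm_le hc
  refine fun r hr => ⟨C * r ^ p, fun z hz => (hC z (norm_pos_iff.1 (hr.trans_le hz))).trans ?_⟩
  exact mul_le_mul_of_nonneg_left (Real.rpow_le_rpow_of_nonpos hr hz hp) hC0

end Homogeneous

theorem contDiffAt_norm_rpow {E : Type*} [NormedAddCommGroup E] [InnerProductSpace ℝ E]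
    (p : ℝ) {m : WithTop ℕ∞} {z : E} (hz : z ≠ 0) : ContDiffAt ℝ m (fun z => ‖z‖ ^ p) z :=
  (contDiffAt_norm ℝ hz).rpow_const_of_ne (norm_ne_zero_iff.2 hz)

theorem norm_smul_le_of_le {F : Type*} [NormedAddCommGroup F] [NormedSpace ℝ F] {a M B : ℝ}
    {v : F} (ha : |a| ≤ M) (hv : ‖v‖ ≤ B) : ‖a • v‖ ≤ M * B := by
  rw [norm_smul, Real.norm_eq_abs]
  exact mul_le_mul ha hv (norm_nonneg v) ((abs_nonneg a).trans ha)

theorem le_norm_sub_of_le_infDist {E : Type*} [SeminormedAddCommGroup E] {Ω : Set E} {x y : E}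
    {r : ℝ} (hx : r ≤ infDist x Ω) (hy : y ∈ Ω) : r ≤ ‖x - y‖ :=
  (hx.trans (infDist_le_dist_of_mem hy)).trans_eq (dist_eq_norm x y)

theorem Bornology.IsBounded.exists_pos_mul_norm_le_infDist {E : Type*}
    [SeminormedAddCommGroup E] {Ω : Set E} (hΩ : IsBounded Ω) {κ : ℝ} (hκ : 0 < κ) :
    ∃ c > 0, ∀ x, κ ≤ infDist x Ω → c * ‖x‖ ≤ infDist x Ω := by
  obtain ⟨R, hR, hΩR⟩ := hΩ.exists_pos_norm_le
  refine ⟨κ / (κ + R), by positivity, fun x hx => ?_⟩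
  rcases Ω.eq_empty_or_nonempty with rfl | hne
  · rw [infDist_empty] at hx; linarith
  refine (le_infDist hne).2 fun y hy => ?_
  have hxy := le_norm_sub_of_le_infDist hx hy
  rw [div_mul_eq_mul_div, div_le_iff₀ (by positivity), dist_eq_norm]
  nlinarith [norm_le_norm_sub_add x y, hΩR y hy]

section Potential

variable {E F : Type*} [NormedAddCommGroup E] [MeasurableSpace E] [NormedAddCommGroup F]
  [NormedSpace ℝ F] {μ : Measure E} {Ω : Set E} {u : E → ℝ} {M : ℝ} {k : E → F} {x : E}

def potential (μ : Measure E) (Ω : Set E) (u : E → ℝ) (k : E → F) (x : E) : F :=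
  ∫ y in Ω, u y • k (x - y) ∂μ

section

variable [BorelSpace E] [SecondCountableTopology E]

theorem aestronglyMeasurable_smul_kernel (hΩ : MeasurableSet Ω)
    (hu : AEStronglyMeasurable u (μ.restrict Ω)) (hk : ∀ z ≠ 0, ContinuousAt k z)
    (hx : 0 < infDist x Ω) :
    AEStronglyMeasurable (fun y => u y • k (x - y)) (μ.restrict Ω) := by
  refine hu.smul (ContinuousOn.aestronglyMeasurable (fun y hy => ?_) hΩ)
  have hxy : x - y ≠ 0 := norm_pos_iff.1 (hx.trans_le (le_norm_sub_of_le_infDist le_rfl hy))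
  exact ((hk _ hxy).comp (continuous_sub_left x).continuousAt).continuousWithinAt

theorem continuousAt_potential (hΩ : MeasurableSet Ω) (hμΩ : μ Ω < ∞)
    (hu : AEStronglyMeasurable u (μ.restrict Ω)) (hM : ∀ y ∈ Ω, |u y| ≤ M)
    (hk : ∀ z ≠ 0, ContinuousAt k z) (hkB : BoundedAwayFromOrigin k) (hx : 0 < infDist x Ω) :
    ContinuousAt (potential μ Ω u k) x := by
  have : IsFiniteMeasure (μ.restrict Ω) := isFiniteMeasure_restrict.2 hμΩ.ne
  set r := infDist x Ω / 2
  have hr : 0 < r := half_pos hx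
  obtain ⟨B, hB⟩ := hkB r hr
  have hU : ∀ᶠ x' in 𝓝 x, r < infDist x' Ω :=
    ((continuous_infDist_pt Ω).tendsto x).eventually (lt_mem_nhds (half_lt_self hx))
  refine continuousAt_of_dominated (bound := fun _ => M * B)
    (hU.mono fun x' hx' => aestronglyMeasurable_smul_kernel hΩ hu hk (hr.trans hx'))
    (hU.mono fun x' hx' => (ae_restrict_iff' hΩ).2 (ae_of_all _ fun y hy =>
      norm_smul_le_of_le (hM y hy) (hB _ (le_norm_sub_of_le_infDist hx'.le hy))))
    (integrable_const _) ((ae_restrict_iff' hΩ).2 (ae_of_all _ fun y hy => ?_))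
  have hxy : x - y ≠ 0 := norm_pos_iff.1 (hx.trans_le (le_norm_sub_of_le_infDist le_rfl hy))
  exact continuousAt_const.smul ((hk _ hxy).comp_of_eq (continuous_sub_right y).continuousAt rfl)

theorem hasFDerivAt_potential [NormedSpace ℝ E] [CompleteSpace F] (hΩ : MeasurableSet Ω)
    (hμΩ : μ Ω < ∞) (hu : AEStronglyMeasurable u (μ.restrict Ω)) (hM : ∀ y ∈ Ω, |u y| ≤ M)
    (hk : ∀ z ≠ 0, ContDiffAt ℝ 1 k z) (hkB : BoundedAwayFromOrigin k)
    (hk'B : BoundedAwayFromOrigin (fderiv ℝ k)) (hx : 0 < infDist x Ω) :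
    HasFDerivAt (potential μ Ω u k) (potential μ Ω u (fderiv ℝ k) x) x := by
  have : IsFiniteMeasure (μ.restrict Ω) := isFiniteMeasure_restrict.2 hμΩ.ne
  set r := infDist x Ω / 2
  have hr : 0 < r := half_pos hx
  obtain ⟨B, hB⟩ := hkB r hr
  obtain ⟨B', hB'⟩ := hk'B r hr
  have hU : ∀ᶠ x' in 𝓝 x, r < infDist x' Ω :=
    ((continuous_infDist_pt Ω).tendsto x).eventually (lt_mem_nhds (half_lt_self hx))
  have hcont : ∀ z ≠ 0, ContinuousAt k z := fun z hz => (hk z hz).continuousAt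
  refine hasFDerivAt_integral_of_dominated_of_fderiv_le (bound := fun _ => M * B') hU
    (hU.mono fun x' hx' => aestronglyMeasurable_smul_kernel hΩ hu hcont (hr.trans hx'))
    ((integrable_const (M * B)).mono' (aestronglyMeasurable_smul_kernel hΩ hu hcont hx)
      ((ae_restrict_iff' hΩ).2 (ae_of_all _ fun y hy =>
        norm_smul_le_of_le (hM y hy) (hB _ (le_norm_sub_of_le_infDist (half_le_self hx.le) hy)))))
    (aestronglyMeasurable_smul_kernel hΩ hu
      (fun z hz => (hk z hz).continuousAt_fderiv one_ne_zero) hx)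
    ((ae_restrict_iff' hΩ).2 (ae_of_all _ fun y hy x' hx' =>
      norm_smul_le_of_le (hM y hy) (hB' _ (le_norm_sub_of_le_infDist (le_of_lt hx') hy))))
    (integrable_const _) ((ae_restrict_iff' hΩ).2 (ae_of_all _ fun y hy x' hx' => ?_))
  have hxy : x' - y ≠ 0 :=
    norm_pos_iff.1 (hr.trans_le (le_norm_sub_of_le_infDist (le_of_lt hx') hy))
  simpa [Function.comp_def, Pi.smul_def] using (((hk _ hxy).differentiableAt
    one_ne_zero).hasFDerivAt.comp x' (hasFDerivAt_sub_const y)).const_smul (u y)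

end

variable [NormedSpace ℝ E] [ProperSpace E] {p : ℝ}

theorem exists_norm_potential_le_of_isPosHomogeneous (hk : IsPosHomogeneous p k) (hp : p ≤ 0)
    (hc : ∀ z ≠ 0, ContinuousAt k z) (hμΩ : μ Ω < ∞) (hM : ∀ y ∈ Ω, |u y| ≤ M) {c : ℝ}
    (hc0 : 0 < c) : ∃ A, 0 ≤ A ∧ ∀ x ≠ 0, c * ‖x‖ ≤ infDist x Ω →
      ‖potential μ Ω u k x‖ ≤ A * ‖x‖ ^ p := by
  obtain ⟨C, hC0, hC⟩ := hk.exists_norm_le hc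
  refine ⟨max (M * (C * c ^ p) * μ.real Ω) 0, le_max_right _ _, fun x hx hxΩ => ?_⟩
  have hcx : 0 < c * ‖x‖ := mul_pos hc0 (norm_pos_iff.2 hx)
  calc ‖potential μ Ω u k x‖ ≤ M * (C * (c * ‖x‖) ^ p) * μ.real Ω := by
        refine norm_setIntegral_le_of_norm_le_const hμΩ fun y hy => norm_smul_le_of_le (hM y hy) ?_
        have hxy := le_norm_sub_of_le_infDist hxΩ hy
        exact (hC _ (norm_pos_iff.1 (hcx.trans_le hxy))).trans
          (mul_le_mul_of_nonneg_left (Real.rpow_le_rpow_of_nonpos hcx hxy hp) hC0)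
    _ = M * (C * c ^ p) * μ.real Ω * ‖x‖ ^ p := by
        rw [Real.mul_rpow hc0.le (norm_nonneg x)]; ring
    _ ≤ _ := by gcongr; exact le_max_left _ _

variable [BorelSpace E] [CompleteSpace F]

theorem hasFDerivAt_potential_of_isPosHomogeneous (hk : IsPosHomogeneous p k) (hp : p ≤ 0)
    (hk1 : ∀ z ≠ 0, ContDiffAt ℝ 1 k z) (hΩ : MeasurableSet Ω) (hμΩ : μ Ω < ∞)
    (hu : AEStronglyMeasurable u (μ.restrict Ω)) (hM : ∀ y ∈ Ω, |u y| ≤ M)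
    (hx : 0 < infDist x Ω) :
    HasFDerivAt (potential μ Ω u k) (potential μ Ω u (fderiv ℝ k) x) x :=
  hasFDerivAt_potential hΩ hμΩ hu hM hk1
    (hk.boundedAwayFromOrigin hp fun z hz => (hk1 z hz).continuousAt)
    (hk.fderiv.boundedAwayFromOrigin (by linarith) fun z hz =>
      (hk1 z hz).continuousAt_fderiv one_ne_zero) hx

theorem contDiffAt_potential_of_isPosHomogeneous (hk : IsPosHomogeneous p k) (hp : p ≤ 0)
    (hk2 : ∀ z ≠ 0, ContDiffAt ℝ 2 k z) (hΩ : MeasurableSet Ω) (hμΩ : μ Ω < ∞)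
    (hu : AEStronglyMeasurable u (μ.restrict Ω)) (hM : ∀ y ∈ Ω, |u y| ≤ M)
    (hx : 0 < infDist x Ω) : ContDiffAt ℝ 2 (potential μ Ω u k) x := by
  have hU : ∀ᶠ x' in 𝓝 x, 0 < infDist x' Ω :=
    ((continuous_infDist_pt Ω).tendsto x).eventually (lt_mem_nhds hx)
  have hk1 : ∀ z ≠ 0, ContDiffAt ℝ 1 (fderiv ℝ k) z := fun z hz =>
    (hk2 z hz).fderiv_right (by norm_num)
  rw [show (2 : WithTop ℕ∞) = ((1 : ℕ) : WithTop ℕ∞) + 1 by norm_num]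
  refine contDiffAt_succ_iff_hasFDerivAt.2 ⟨_, ⟨_, hU, fun x' hx' =>
    hasFDerivAt_potential_of_isPosHomogeneous hk hp (fun z hz => (hk2 z hz).of_le one_le_two)
      hΩ hμΩ hu hM hx'⟩, ?_⟩
  rw [show ((1 : ℕ) : WithTop ℕ∞) = ((0 : ℕ) : WithTop ℕ∞) + 1 by norm_num]
  refine contDiffAt_succ_iff_hasFDerivAt.2 ⟨_, ⟨_, hU, fun x' hx' =>
    hasFDerivAt_potential_of_isPosHomogeneous hk.fderiv (by linarith) hk1 hΩ hμΩ hu hM hx'⟩, ?_⟩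
  refine contDiffAt_zero.2 ⟨_, hU, fun x' hx' => (continuousAt_potential hΩ hμΩ hu hM
    (fun z hz => (hk1 z hz).continuousAt_fderiv one_ne_zero) ?_ hx').continuousWithinAt⟩
  exact hk.fderiv.fderiv.boundedAwayFromOrigin (by linarith) fun z hz =>
    (hk1 z hz).continuousAt_fderiv one_ne_zero

theorem exists_decay_potential_of_isPosHomogeneous (hk : IsPosHomogeneous p k) (hp : p ≤ 0)
    (hk2 : ∀ z ≠ 0, ContDiffAt ℝ 2 k z) (hΩ : MeasurableSet Ω) (hμΩ : μ Ω < ∞)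
    (hu : AEStronglyMeasurable u (μ.restrict Ω)) (hM : ∀ y ∈ Ω, |u y| ≤ M) {c : ℝ}
    (hc : 0 < c) : ∃ A, ∀ x ≠ 0, c * ‖x‖ ≤ infDist x Ω →
      ‖potential μ Ω u k x‖ ≤ A * ‖x‖ ^ p ∧
      ‖fderiv ℝ (potential μ Ω u k) x‖ ≤ A * ‖x‖ ^ (p - 1) ∧
      ‖fderiv ℝ (fderiv ℝ (potential μ Ω u k)) x‖ ≤ A * ‖x‖ ^ (p - 2) := by
  have hk1 : ∀ z ≠ 0, ContDiffAt ℝ 1 k z := fun z hz => (hk2 z hz).of_le one_le_two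
  have hk1' : ∀ z ≠ 0, ContDiffAt ℝ 1 (fderiv ℝ k) z := fun z hz =>
    (hk2 z hz).fderiv_right (by norm_num)
  obtain ⟨A₀, hA₀, h₀⟩ := exists_norm_potential_le_of_isPosHomogeneous hk hp
    (fun z hz => (hk2 z hz).continuousAt) hμΩ hM hc
  obtain ⟨A₁, hA₁, h₁⟩ := exists_norm_potential_le_of_isPosHomogeneous hk.fderiv (by linarith)
    (fun z hz => (hk1' z hz).continuousAt) hμΩ hM hc
  obtain ⟨A₂, hA₂, h₂⟩ := exists_norm_potential_le_of_isPosHomogeneous hk.fderiv.fderiv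
    (by linarith) (fun z hz => (hk1' z hz).continuousAt_fderiv one_ne_zero) hμΩ hM hc
  refine ⟨A₀ + A₁ + A₂, fun x hx hxΩ => ?_⟩
  have hpos : 0 < infDist x Ω := (mul_pos hc (norm_pos_iff.2 hx)).trans_le hxΩ
  have hD : fderiv ℝ (potential μ Ω u k) =ᶠ[𝓝 x] potential μ Ω u (fderiv ℝ k) :=
    (((continuous_infDist_pt Ω).tendsto x).eventually (lt_mem_nhds hpos)).mono fun x' hx' =>
      (hasFDerivAt_potential_of_isPosHomogeneous hk hp hk1 hΩ hμΩ hu hM hx').fderiv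
  rw [hD.eq_of_nhds, hD.fderiv_eq, (hasFDerivAt_potential_of_isPosHomogeneous hk.fderiv
    (by linarith) hk1' hΩ hμΩ hu hM hpos).fderiv, show p - 2 = p - 1 - 1 by ring]
  refine ⟨(h₀ x hx hxΩ).trans ?_, (h₁ x hx hxΩ).trans ?_, (h₂ x hx hxΩ).trans ?_⟩ <;>
    gcongr <;> linarith

end Potential

section FracHalf

variable {n : ℕ} {s : ℝ} {Ω : Set (En n)} {u : En n → ℝ} {x : En n}

theorem fracHalf_eq_neg_integral (hzero : ∀ y ∉ Ω, u y = 0) (hx : x ∉ Ω) :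
    fracHalf n s u x = -(cK n (s / 2) * ∫ y in Ω, u y / ‖x - y‖ ^ ((n : ℝ) + s)) := by
  have htrans : ∫ z, u (x + z) / ‖z‖ ^ ((n : ℝ) + s) = ∫ y, u y / ‖x - y‖ ^ ((n : ℝ) + s) := by
    rw [← integral_add_left_eq_self (fun y => u y / ‖x - y‖ ^ ((n : ℝ) + s)) x]
    simp only [sub_add_cancel_left, norm_neg]
  rw [fracHalf, hzero x hx]
  simp only [zero_sub, neg_div, integral_neg, mul_neg, htrans]
  rw [setIntegral_eq_integral_of_forall_compl_eq_zero fun y hy => by rw [hzero y hy, zero_div]]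

theorem potential_norm_rpow_eq_integral :
    potential volume Ω u (fun z : En n => ‖z‖ ^ (-(n : ℝ) - s)) x =
      ∫ y in Ω, u y / ‖x - y‖ ^ ((n : ℝ) + s) := by
  refine integral_congr_ae (ae_of_all _ fun y => ?_)
  simp only [smul_eq_mul, div_eq_mul_inv, ← neg_add', Real.rpow_neg (norm_nonneg _)]

theorem fracHalf_eventuallyEq_potential (hzero : ∀ y ∉ Ω, u y = 0) (hx : x ∉ closure Ω) :
    fracHalf n s u =ᶠ[𝓝 x]
      (-cK n (s / 2)) • potential volume Ω u (fun z => ‖z‖ ^ (-(n : ℝ) - s)) := by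
  filter_upwards [isClosed_closure.isOpen_compl.mem_nhds hx] with x' hx'
  rw [Pi.smul_apply, smul_eq_mul, potential_norm_rpow_eq_integral, neg_mul,
    fracHalf_eq_neg_integral hzero fun h => hx' (subset_closure h)]

theorem norm_derivs_le_of_eventuallyEq_smul {g P : En n → ℝ} {a : ℝ} (h : g =ᶠ[𝓝 x] a • P) :
    |g x| ≤ |a| * ‖P x‖ ∧ ‖gradient g x‖ ≤ |a| * ‖fderiv ℝ P x‖ ∧
      ‖hess n g x‖ ≤ |a| * ‖fderiv ℝ (fderiv ℝ P) x‖ := by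
  rw [h.eq_of_nhds, gradient, LinearIsometryEquiv.norm_map, hess, h.fderiv.fderiv_eq,
    h.fderiv_eq, fderiv_const_smul_field, fderiv_const_smul_field (F := En n →L[ℝ] ℝ)]
  simp only [Pi.smul_apply]
  exact ⟨(abs_mul _ _).le, ContinuousLinearMap.opNorm_smul_le a _,
    ContinuousLinearMap.opNorm_smul_le a _⟩

end FracHalf

theorem fracHalf_decay_far_away_general (n : ℕ) (s : ℝ) (hs : s ∈ Set.Ioo (0:ℝ) 1)
    (Ω : Set (En n)) (hΩo : IsOpen Ω) (hΩb : IsBounded Ω) (h0 : (0 : En n) ∈ Ω)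
    (κ : ℝ) (hκ : 0 < κ)
    (hsep : ∀ y ∈ Ω, ∀ x : En n, x ∉ (2 : ℝ) • Ω → κ ≤ ‖x - y‖)
    (u : En n → ℝ) (M : ℝ) (L : ℝ≥0)
    (hM : ∀ x, |u x| ≤ M) (hL : LipschitzWith L u)
    (hzero : ∀ x ∉ Ω, u x = 0) :
    (∀ x : En n, x ∉ (2 : ℝ) • Ω →
      fracHalf n s u x = -(cK n (s / 2) * ∫ y in Ω, u y / ‖x - y‖ ^ ((n : ℝ) + s)) ∧
      ContDiffAt ℝ 2 (fracHalf n s u) x) ∧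
    ∃ C : ℝ, ∀ x : En n, x ∉ (2 : ℝ) • Ω →
      |fracHalf n s u x| ≤ C * ‖x‖ ^ (-(n : ℝ) - s) ∧
      ‖gradient (fracHalf n s u) x‖ ≤ C * ‖x‖ ^ (-(n : ℝ) - s - 1) ∧
      ‖hess n (fracHalf n s u) x‖ ≤ C * ‖x‖ ^ (-(n : ℝ) - s - 2) := by
  set K : En n → ℝ := fun z => ‖z‖ ^ (-(n : ℝ) - s)
  set c := cK n (s / 2)
  have hp : -(n : ℝ) - s ≤ 0 := by linarith [hs.1, (n.cast_nonneg : (0 : ℝ) ≤ n)]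
  have hK : IsPosHomogeneous (-(n : ℝ) - s) K := isPosHomogeneous_norm_rpow _
  have hK2 : ∀ z ≠ 0, ContDiffAt ℝ 2 K z := fun z hz => contDiffAt_norm_rpow _ hz
  have hu : AEStronglyMeasurable u (volume.restrict Ω) := hL.continuous.aestronglyMeasurable
  have hMΩ : ∀ y ∈ Ω, |u y| ≤ M := fun y _ => hM y
  have hfar : ∀ x ∉ (2 : ℝ) • Ω, κ ≤ infDist x Ω := fun x hx =>
    (le_infDist ⟨0, h0⟩).2 fun y hy => (hsep y hy x hx).trans_eq (dist_eq_norm x y).symm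
  have hclos : ∀ x ∉ (2 : ℝ) • Ω, x ∉ closure Ω := fun x hx =>
    (infDist_pos_iff_notMem_closure ⟨0, h0⟩).2 (hκ.trans_le (hfar x hx))
  have hloc : ∀ x ∉ (2 : ℝ) • Ω, fracHalf n s u =ᶠ[𝓝 x] (-c) • potential volume Ω u K :=
    fun x hx => fracHalf_eventuallyEq_potential hzero (hclos x hx)
  refine ⟨fun x hx => ⟨fracHalf_eq_neg_integral hzero fun h => hclos x hx (subset_closure h),
    ((contDiffAt_potential_of_isPosHomogeneous hK hp hK2 hΩo.measurableSet hΩb.measure_lt_top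
      hu hMΩ (hκ.trans_le (hfar x hx))).const_smul (-c)).congr_of_eventuallyEq (hloc x hx)⟩, ?_⟩
  obtain ⟨c₀, hc₀, hc₀x⟩ := hΩb.exists_pos_mul_norm_le_infDist hκ
  obtain ⟨A, hA⟩ := exists_decay_potential_of_isPosHomogeneous hK hp hK2 hΩo.measurableSet
    hΩb.measure_lt_top hu hMΩ hc₀
  refine ⟨|c| * A, fun x hx => ?_⟩
  have hx0 : x ≠ 0 := by
    rintro rfl
    exact hx (by simpa using Set.smul_mem_smul_set (a := (2 : ℝ)) h0)
  obtain ⟨h₀, h₁, h₂⟩ := hA x hx0 (hc₀x x (hfar x hx))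
  obtain ⟨e₀, e₁, e₂⟩ := norm_derivs_le_of_eventuallyEq_smul (hloc x hx)
  rw [abs_neg] at e₀ e₁ e₂
  simp only [mul_assoc]
  exact ⟨e₀.trans (by gcongr), e₁.trans (by gcongr), e₂.trans (by gcongr)⟩

/-- decay of `𝔤 = (-Δ)^{s/2}u` away from `2Ω`: if `u` is bounded and
Lipschitz, `u = 0` in `Ωᶜ`, `0 ∈ Ω`, and `dist(Ω, (2Ω)ᶜ) ≥ κ > 0`, then for `x ∉ 2Ω`
one has `𝔤(x) = -c_{n,s/2}∫_Ω u(y)/|x-y|^{n+s} dy`, `𝔤` is twice continuously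
differentiable at `x`, and `|𝔤(x)| ≤ C|x|^{-n-s}`, `|∇𝔤(x)| ≤ C|x|^{-n-s-1}`,
`|D²𝔤(x)| ≤ C|x|^{-n-s-2}` with `C` independent of `x`. -/
theorem fracHalf_decay_far_away (n : ℕ) (hn : 1 ≤ n) (s : ℝ) (hs : s ∈ Set.Ioo (0:ℝ) 1)
    (Ω : Set (En n)) (hΩo : IsOpen Ω) (hΩb : IsBounded Ω) (h0 : (0 : En n) ∈ Ω)
    (κ : ℝ) (hκ : 0 < κ)
    (hsep : ∀ y ∈ Ω, ∀ x : En n, x ∉ (2 : ℝ) • Ω → κ ≤ ‖x - y‖)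
    (u : En n → ℝ) (M : ℝ) (L : ℝ≥0)
    (hM : ∀ x, |u x| ≤ M) (hL : LipschitzWith L u)
    (hzero : ∀ x ∉ Ω, u x = 0) :
    (∀ x : En n, x ∉ (2 : ℝ) • Ω →
      fracHalf n s u x = -(cK n (s / 2) * ∫ y in Ω, u y / ‖x - y‖ ^ ((n : ℝ) + s)) ∧
      ContDiffAt ℝ 2 (fracHalf n s u) x) ∧
    ∃ C : ℝ, ∀ x : En n, x ∉ (2 : ℝ) • Ω →
      |fracHalf n s u x| ≤ C * ‖x‖ ^ (-(n : ℝ) - s) ∧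
      ‖gradient (fracHalf n s u) x‖ ≤ C * ‖x‖ ^ (-(n : ℝ) - s - 1) ∧
      ‖hess n (fracHalf n s u) x‖ ≤ C * ‖x‖ ^ (-(n : ℝ) - s - 2) :=
  fracHalf_decay_far_away_general n s hs Ω hΩo hΩb h0 κ hκ hsep u M L hM hL hzero
end
end
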